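/- arXiv:0712.0694 — 2 statements merged into one kernel-verified Lean document; each statement's English description precedes it below -/
import Mathlib

section
/- Let M ⊂ ℝ^{n+1} be a compact embedded hypersurface bounding a compact domain D, with unit inner normal ν, and let d_F(x,y) = F*(y−x) be the anisotropic distance. For any y ∈ D \ M there exists p ∈ M with y − p = d_F(M, y)·φ(ν(p)), where d_F(M,y) = inf{d_F(q,y) : q ∈ M}. -/
open scoped RealInnerProductSpace
open Metric Set MeasureTheory

noncomputable section

/-- `ℝ^{n+1}`. -/
abbrev Euc (n : ℕ) := EuclideanSpace ℝ (Fin (n + 1))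

/-- The unit sphere `S^n ⊂ ℝ^{n+1}`. -/
def unitSphere (n : ℕ) : Set (Euc n) := sphere (0 : Euc n) 1

/-- The data of a smooth positive function `F` on `S^n` satisfying the convexity
condition `(D²F + F·Id) > 0`, encoded through its positively 1-homogeneous
extension to `ℝ^{n+1} \ {0}`: the Hessian of the extension is positive definite
on the tangent hyperplane of the sphere (its restriction there is exactly
`D²F + F·Id`). -/
structure IsAnisoNorm {n : ℕ} (F : Euc n → ℝ) : Prop where
  smooth : ContDiffOn ℝ (⊤ : ℕ∞) F {(0 : Euc n)}ᶜ
  homog : ∀ t : ℝ, 0 < t → ∀ x : Euc n, F (t • x) = t * F x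
  pos : ∀ x ∈ unitSphere n, 0 < F x
  convex : ∀ x ∈ unitSphere n, ∀ v : Euc n, ⟪v, x⟫ = 0 → v ≠ 0 →
    0 < ⟪fderiv ℝ (gradient F) x v, v⟫

/-- The map `φ(x) = F(x)·x + (grad_{S^n} F)_x`; for the 1-homogeneous extension
this is exactly the gradient of `F`. -/
def wulffMap {n : ℕ} (F : Euc n → ℝ) : Euc n → Euc n := gradient F

/-- The Wulff shape `W_F = φ(S^n)`. -/
def wulffShape {n : ℕ} (F : Euc n → ℝ) : Set (Euc n) := wulffMap F '' unitSphere n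

/-- The dual function `F*(x) = sup { ⟨x,z⟩ / F(z) : z ∈ S^n }`. -/
def dualF {n : ℕ} (F : Euc n → ℝ) (x : Euc n) : ℝ :=
  ⨆ z : unitSphere n, ⟪x, (z : Euc n)⟫ / F (z : Euc n)

/-- The anisotropic distance `d_F(x,y) = F*(y - x)`. -/
def anisoDist {n : ℕ} (F : Euc n → ℝ) (x y : Euc n) : ℝ := dualF F (y - x)

/-- `d_F(M, y) = inf { d_F(p, y) : p ∈ M }`. -/
def anisoDistSet {n : ℕ} (F : Euc n → ℝ) (M : Set (Euc n)) (y : Euc n) : ℝ :=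
  sInf ((fun p => anisoDist F p y) '' M)

/-- The `F`-cut value `c(p)`: the greatest `t > 0` with
`d_F(M, p + t·φ(ν(p))) = t`. -/
def cutValue {n : ℕ} (F : Euc n → ℝ) (M : Set (Euc n)) (ν : Euc n → Euc n)
    (p : Euc n) : ℝ :=
  sSup {t : ℝ | 0 < t ∧ anisoDistSet F M (p + t • wulffMap F (ν p)) = t}

/-- `v` is the unit inner normal of the hypersurface `M = ∂D` at `p`:
it is a unit vector, orthogonal to the tangent directions of `M` at `p`,
and points into the domain `D`. -/
def IsInnerUnitNormalAt {n : ℕ} (D M : Set (Euc n)) (p v : Euc n) : Prop :=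
  ‖v‖ = 1 ∧ (∀ u ∈ tangentConeAt ℝ M p, ⟪v, u⟫ = 0) ∧
    ∃ ε > 0, ∀ t : ℝ, t ∈ Set.Ioo 0 ε → p + t • v ∈ interior D

namespace Aniso
variable {n : ℕ} {F : Euc n → ℝ}

lemma mem_sphere_iff {x : Euc n} : x ∈ unitSphere n ↔ ‖x‖ = 1 := by
  simp [unitSphere, mem_sphere_iff_norm]

lemma sphere_ne_zero {x : Euc n} (hx : x ∈ unitSphere n) : x ≠ 0 := by
  intro h; rw [mem_sphere_iff] at hx; simp [h] at hx

instance : Nontrivial (Euc n) := by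
  refine ⟨EuclideanSpace.single 0 1, 0, fun h => ?_⟩
  have := congrArg (fun v : Euc n => ‖v‖) h
  simp [EuclideanSpace.norm_single] at this

lemma sphere_nonempty : (unitSphere n).Nonempty :=
  NormedSpace.sphere_nonempty.2 zero_le_one

instance : Nonempty (unitSphere n) := sphere_nonempty.to_subtype

lemma neg_mem_sphere {x : Euc n} (hx : x ∈ unitSphere n) : -x ∈ unitSphere n := by
  rw [mem_sphere_iff] at *; simpa using hx

lemma smul_mem_sphere {x : Euc n} (hx : x ≠ 0) : ‖x‖⁻¹ • x ∈ unitSphere n := by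
  rw [mem_sphere_iff, norm_smul, norm_inv, norm_norm]
  exact inv_mul_cancel₀ (norm_ne_zero_iff.2 hx)

variable (hF : IsAnisoNorm F)
include hF

lemma Fmin : ∃ m : ℝ, 0 < m ∧ ∀ z ∈ unitSphere n, m ≤ F z := by
  have hc : ContinuousOn F (unitSphere n) :=
    (hF.smooth.continuousOn).mono (fun x hx => sphere_ne_zero hx)
  obtain ⟨z₀, hz₀, hmin⟩ := (isCompact_sphere (0 : Euc n) 1).exists_isMinOn
    sphere_nonempty hc
  exact ⟨F z₀, hF.pos z₀ hz₀, fun z hz => hmin hz⟩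

lemma quot_le {x : Euc n} {m : ℝ} (hm : 0 < m) (hmle : ∀ z ∈ unitSphere n, m ≤ F z)
    (z : unitSphere n) : ⟪x, (z : Euc n)⟫ / F (z : Euc n) ≤ ‖x‖ / m := by
  have h1 : ⟪x, (z : Euc n)⟫ ≤ ‖x‖ := by
    calc ⟪x, (z : Euc n)⟫ ≤ ‖x‖ * ‖(z : Euc n)‖ := real_inner_le_norm _ _
    _ = ‖x‖ := by rw [mem_sphere_iff.1 z.2, mul_one]
  exact div_le_div₀ (norm_nonneg x) h1 hm (hmle _ z.2)

lemma bddAbove_dual (x : Euc n) :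
    BddAbove (range fun z : unitSphere n => ⟪x, (z : Euc n)⟫ / F (z : Euc n)) := by
  obtain ⟨m, hm, hmle⟩ := Fmin hF
  exact ⟨‖x‖ / m, by rintro r ⟨z, rfl⟩; exact quot_le hF hm hmle z⟩

lemma le_dualF {x z : Euc n} (hz : z ∈ unitSphere n) :
    ⟪x, z⟫ / F z ≤ dualF F x := le_ciSup (bddAbove_dual hF x) ⟨z, hz⟩

lemma dualF_le {x : Euc n} {a : ℝ}
    (h : ∀ z ∈ unitSphere n, ⟪x, z⟫ / F z ≤ a) : dualF F x ≤ a :=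
  ciSup_le fun z => h z z.2

lemma dualF_norm_le (x : Euc n) {m : ℝ} (hm : 0 < m)
    (hmle : ∀ z ∈ unitSphere n, m ≤ F z) : dualF F x ≤ ‖x‖ / m :=
  dualF_le hF fun z hz => quot_le hF hm hmle ⟨z, hz⟩

lemma dualF_nonneg (x : Euc n) : 0 ≤ dualF F x := by
  obtain ⟨z, hz⟩ := sphere_nonempty (n := n)
  rcases le_or_gt 0 (⟪x, z⟫ / F z) with h | h
  · exact h.trans (le_dualF hF hz)
  · refine le_trans ?_ (le_dualF hF (neg_mem_sphere hz))
    have hFz : 0 < F z := hF.pos z hz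
    have hFnz : 0 < F (-z) := hF.pos _ (neg_mem_sphere hz)
    have : ⟪x, z⟫ < 0 := by
      by_contra hc
      exact absurd (div_nonneg (not_lt.1 hc) hFz.le) (not_le.2 h)
    rw [inner_neg_right]
    exact div_nonneg (by linarith) hFnz.le

lemma dualF_zero : dualF F (0 : Euc n) = 0 := by
  refine le_antisymm (dualF_le hF fun z hz => by simp) (dualF_nonneg hF 0)

lemma dualF_pos {x : Euc n} (hx : x ≠ 0) : 0 < dualF F x := by
  have hz := smul_mem_sphere (n := n) hx
  refine lt_of_lt_of_le ?_ (le_dualF hF hz)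
  have h1 : ⟪x, ‖x‖⁻¹ • x⟫ = ‖x‖ := by
    rw [real_inner_smul_right, real_inner_self_eq_norm_sq]
    have : ‖x‖ ≠ 0 := norm_ne_zero_iff.2 hx
    field_simp
  rw [h1]
  exact div_pos (norm_pos_iff.2 hx) (hF.pos _ hz)

lemma dualF_smul {x : Euc n} {t : ℝ} (ht : 0 ≤ t) :
    dualF F (t • x) = t * dualF F x := by
  rcases eq_or_lt_of_le ht with rfl | ht
  · rw [zero_smul, zero_mul]
    refine le_antisymm (dualF_le hF fun z hz => by simp) (dualF_nonneg hF 0)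
  · refine le_antisymm (dualF_le hF fun z hz => ?_) ?_
    · rw [real_inner_smul_left, mul_div_assoc]
      exact mul_le_mul_of_nonneg_left (le_dualF hF hz) ht.le
    · rw [← le_div_iff₀' ht]
      refine dualF_le hF fun z hz => ?_
      rw [le_div_iff₀' ht, ← mul_div_assoc, ← real_inner_smul_left]
      exact le_dualF hF hz

lemma dualF_add_le (x x' : Euc n) : dualF F (x + x') ≤ dualF F x + dualF F x' := by
  refine dualF_le hF fun z hz => ?_
  rw [inner_add_left, add_div]
  exact add_le_add (le_dualF hF hz) (le_dualF hF hz)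

lemma dualF_lipschitz {m : ℝ} (hm : 0 < m) (hmle : ∀ z ∈ unitSphere n, m ≤ F z)
    (x x' : Euc n) : dualF F x ≤ dualF F x' + ‖x - x'‖ / m := by
  calc dualF F x = dualF F (x' + (x - x')) := by congr 1; abel
  _ ≤ dualF F x' + dualF F (x - x') := dualF_add_le hF _ _
  _ ≤ dualF F x' + ‖x - x'‖ / m := by
      exact add_le_add le_rfl (dualF_norm_le hF _ hm hmle)

lemma dualF_continuous : Continuous (dualF F) := by
  obtain ⟨m, hm, hmle⟩ := Fmin hF
  have : LipschitzWith (⟨m⁻¹, by positivity⟩) (dualF F) := by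
    apply LipschitzWith.of_dist_le_mul
    intro x x'
    rw [Real.dist_eq, abs_sub_le_iff]
    constructor
    · have := dualF_lipschitz hF hm hmle x x'
      rw [dist_eq_norm]
      calc dualF F x - dualF F x' ≤ ‖x - x'‖ / m := by linarith
      _ = m⁻¹ * ‖x - x'‖ := by rw [div_eq_inv_mul]
    · have := dualF_lipschitz hF hm hmle x' x
      rw [dist_eq_norm, ← norm_neg, neg_sub]
      calc dualF F x' - dualF F x ≤ ‖x' - x‖ / m := by linarith
      _ = m⁻¹ * ‖x' - x‖ := by rw [div_eq_inv_mul]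
  exact this.continuous

end Aniso

section B
variable {n : ℕ} {F : Euc n → ℝ}
open Aniso

lemma inner_gradient_eq {f : Euc n → ℝ} (x v : Euc n) :
    ⟪gradient f x, v⟫ = fderiv ℝ f x v := by
  rw [gradient]; exact InnerProductSpace.toDual_symm_apply

variable (hF : IsAnisoNorm F)
include hF

lemma F_diffAt {x : Euc n} (hx : x ≠ 0) : DifferentiableAt ℝ F x := by
  have h := hF.smooth.contDiffAt (IsOpen.mem_nhds isOpen_compl_singleton hx)
  exact h.differentiableAt (by simp)

lemma F_hasFDeriv {x : Euc n} (hx : x ≠ 0) :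
    HasFDerivAt F (fderiv ℝ F x) x := (F_diffAt hF hx).hasFDerivAt

/-- derivative of `t ↦ F (t • x)` -/
lemma euler {x : Euc n} (hx : x ≠ 0) : ⟪gradient F x, x⟫ = F x := by
  have h1 : HasDerivAt (fun t : ℝ => F (t • x)) (fderiv ℝ F x x) 1 := by
    have hc : HasDerivAt (fun t : ℝ => t • x) x 1 := by
      simpa using (hasDerivAt_id (1:ℝ)).smul_const x
    have h1x : (1:ℝ) • x ≠ 0 := by simpa using hx
    have := (F_hasFDeriv hF h1x).comp_hasDerivAt 1 hc
    rw [one_smul] at this; exact this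
  have h2 : HasDerivAt (fun t : ℝ => F (t • x)) (F x) 1 := by
    have : ∀ᶠ t in nhds (1:ℝ), F (t • x) = t * F x := by
      filter_upwards [eventually_gt_nhds zero_lt_one] with t ht
      exact hF.homog t ht x
    have heq : (fun t : ℝ => F (t • x)) =ᶠ[nhds (1:ℝ)] fun t => t * F x := this
    exact HasDerivAt.congr_of_eventuallyEq (by simpa using (hasDerivAt_id (1:ℝ)).mul_const (F x)) heq
  rw [inner_gradient_eq]
  exact h1.unique h2

lemma fderiv_homog {x : Euc n} (hx : x ≠ 0) {t : ℝ} (ht : 0 < t) :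
    fderiv ℝ F (t • x) = fderiv ℝ F x := by
  have htx : t • x ≠ 0 := smul_ne_zero (ne_of_gt ht) hx
  have h1 : HasFDerivAt (fun z : Euc n => F (t • z))
      ((fderiv ℝ F (t • x)).comp (t • (ContinuousLinearMap.id ℝ (Euc n)))) x := by
    have hs : HasFDerivAt (fun z : Euc n => t • z) (t • (ContinuousLinearMap.id ℝ (Euc n))) x := by
      exact (ContinuousLinearMap.hasFDerivAt _ : HasFDerivAt (fun z : Euc n => (t • (ContinuousLinearMap.id ℝ (Euc n))) z) _ x)
    exact (F_hasFDeriv hF htx).comp x hs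
  have h2 : HasFDerivAt (fun z : Euc n => F (t • z)) (t • fderiv ℝ F x) x := by
    have heq : (fun z : Euc n => F (t • z)) = fun z => t * F z := by
      funext z; exact hF.homog t ht z
    rw [heq]
    exact (F_hasFDeriv hF hx).const_mul t
  have := h1.unique h2
  ext v
  have hv := congrFun (congrArg DFunLike.coe this) v
  simp only [ContinuousLinearMap.comp_apply, ContinuousLinearMap.smul_apply,
    ContinuousLinearMap.id_apply] at hv
  have ht' : t ≠ 0 := ne_of_gt ht
  have : fderiv ℝ F (t • x) (t • v) = t * fderiv ℝ F x v := by simpa using hv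
  rw [_root_.map_smul] at this
  simp only [smul_eq_mul] at this
  exact mul_left_cancel₀ ht' this

lemma gradient_homog {x : Euc n} (hx : x ≠ 0) {t : ℝ} (ht : 0 < t) :
    gradient F (t • x) = gradient F x := by
  rw [gradient, gradient, fderiv_homog hF hx ht]

lemma grad_smooth : ContDiffOn ℝ (⊤ : ℕ∞) (gradient F) {(0 : Euc n)}ᶜ := by
  have h1 : ContDiffOn ℝ (⊤ : ℕ∞) (fderiv ℝ F) {(0 : Euc n)}ᶜ := by
    exact hF.smooth.fderiv_of_isOpen isOpen_compl_singleton (by simp)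
  have h2 : ContDiff ℝ (⊤ : ℕ∞) (fun ℓ : (Euc n) →L[ℝ] ℝ => (InnerProductSpace.toDual ℝ (Euc n)).symm ℓ) :=
    (InnerProductSpace.toDual ℝ (Euc n)).symm.contDiff
  exact h2.comp_contDiffOn h1

lemma grad_diffAt {x : Euc n} (hx : x ≠ 0) : DifferentiableAt ℝ (gradient F) x := by
  have h := (grad_smooth hF).contDiffAt (IsOpen.mem_nhds isOpen_compl_singleton hx)
  exact h.differentiableAt (by simp)

lemma hessian_radial {x : Euc n} (hx : x ≠ 0) :
    fderiv ℝ (gradient F) x x = 0 := by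
  have h1 : HasDerivAt (fun t : ℝ => gradient F (t • x)) (fderiv ℝ (gradient F) x x) 1 := by
    have hc : HasDerivAt (fun t : ℝ => t • x) x 1 := by
      simpa using (hasDerivAt_id (1:ℝ)).smul_const x
    have h1x : (1:ℝ) • x ≠ 0 := by simpa using hx
    have := ((grad_diffAt hF h1x).hasFDerivAt).comp_hasDerivAt 1 hc
    rw [one_smul] at this; exact this
  have h2 : HasDerivAt (fun t : ℝ => gradient F (t • x)) 0 1 := by
    have : ∀ᶠ t in nhds (1:ℝ), gradient F (t • x) = gradient F x := by
      filter_upwards [eventually_gt_nhds zero_lt_one] with t ht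
      exact gradient_homog hF hx ht
    have heq : (fun t : ℝ => gradient F (t • x)) =ᶠ[nhds (1:ℝ)] fun _ => gradient F x := this
    exact (hasDerivAt_const (1:ℝ) (gradient F x)).congr_of_eventuallyEq heq
  exact h1.unique h2

lemma hessian_symm {x : Euc n} (hx : x ≠ 0) (u v : Euc n) :
    ⟪fderiv ℝ (gradient F) x u, v⟫ = ⟪fderiv ℝ (gradient F) x v, u⟫ := by
  have hopen : {(0 : Euc n)}ᶜ ∈ nhds x := IsOpen.mem_nhds isOpen_compl_singleton hx
  have hf' : ∀ᶠ y in nhds x, HasFDerivAt F (fderiv ℝ F y) y := by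
    filter_upwards [hopen] with y hy
    exact F_hasFDeriv hF hy
  have h1 : ContDiffOn ℝ (⊤ : ℕ∞) (fderiv ℝ F) {(0 : Euc n)}ᶜ :=
    hF.smooth.fderiv_of_isOpen isOpen_compl_singleton (by simp)
  have hdiff : DifferentiableAt ℝ (fderiv ℝ F) x :=
    ((h1.contDiffAt hopen).differentiableAt (by simp))
  have hsymm := second_derivative_symmetric_of_eventually hf' hdiff.hasFDerivAt u v
  -- relate fderiv (gradient F) to fderiv (fderiv F)
  have hgradeq : gradient F = (InnerProductSpace.toDual ℝ (Euc n)).symm ∘ (fderiv ℝ F) := by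
    funext z; rw [gradient]; rfl
  have key2 : ∀ w w' : Euc n, ⟪fderiv ℝ (gradient F) x w, w'⟫ = fderiv ℝ (fderiv ℝ F) x w w' := by
    intro w w'
    rw [hgradeq, LinearIsometryEquiv.comp_fderiv]
    simp only [ContinuousLinearMap.comp_apply]
    exact InnerProductSpace.toDual_symm_apply
  rw [key2, key2]
  exact hsymm

end B

section C
variable {n : ℕ} {F : Euc n → ℝ}
open Aniso Real

/-- great circle -/
def gc (z v : Euc n) (t : ℝ) : Euc n := Real.cos t • z + Real.sin t • v

def gc' (z v : Euc n) (t : ℝ) : Euc n := (-Real.sin t) • z + Real.cos t • v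

variable {z v : Euc n} (hz : ‖z‖ = 1) (hv : ‖v‖ = 1) (hzv : ⟪z, v⟫ = 0)

section circ
include hz hv hzv

lemma gc_inner_self (t : ℝ) : ⟪gc z v t, gc z v t⟫ = 1 := by
  have h1 : ⟪z, z⟫ = 1 := by rw [real_inner_self_eq_norm_sq, hz]; norm_num
  have h2 : ⟪v, v⟫ = 1 := by rw [real_inner_self_eq_norm_sq, hv]; norm_num
  have h3 : ⟪v, z⟫ = 0 := by rw [real_inner_comm]; exact hzv
  simp only [gc, inner_add_left, inner_add_right, real_inner_smul_left, real_inner_smul_right,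
    h1, h2, h3, hzv]
  nlinarith [Real.sin_sq_add_cos_sq t]

lemma gc_norm (t : ℝ) : ‖gc z v t‖ = 1 := by
  have := gc_inner_self hz hv hzv (t := t)
  rw [real_inner_self_eq_norm_sq] at this
  nlinarith [norm_nonneg (gc z v t)]

lemma gc_ne_zero (t : ℝ) : gc z v t ≠ 0 := by
  intro h
  have := gc_norm hz hv hzv (t := t)
  rw [h] at this; simp at this

lemma gc_mem_sphere (t : ℝ) : gc z v t ∈ unitSphere n := by
  rw [mem_sphere_iff]; exact gc_norm hz hv hzv t

lemma gc'_norm (t : ℝ) : ‖gc' z v t‖ = 1 := by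
  have h1 : ⟪z, z⟫ = 1 := by rw [real_inner_self_eq_norm_sq, hz]; norm_num
  have h2 : ⟪v, v⟫ = 1 := by rw [real_inner_self_eq_norm_sq, hv]; norm_num
  have h3 : ⟪v, z⟫ = 0 := by rw [real_inner_comm]; exact hzv
  have : ⟪gc' z v t, gc' z v t⟫ = 1 := by
    simp only [gc', inner_add_left, inner_add_right, real_inner_smul_left, real_inner_smul_right,
      h1, h2, h3, hzv]
    nlinarith [Real.sin_sq_add_cos_sq t]
  rw [real_inner_self_eq_norm_sq] at this
  nlinarith [norm_nonneg (gc' z v t)]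

lemma gc'_inner_gc (t : ℝ) : ⟪gc' z v t, gc z v t⟫ = 0 := by
  have h1 : ⟪z, z⟫ = 1 := by rw [real_inner_self_eq_norm_sq, hz]; norm_num
  have h2 : ⟪v, v⟫ = 1 := by rw [real_inner_self_eq_norm_sq, hv]; norm_num
  have h3 : ⟪v, z⟫ = 0 := by rw [real_inner_comm]; exact hzv
  simp only [gc, gc', inner_add_left, inner_add_right, real_inner_smul_left, real_inner_smul_right,
    h1, h2, h3, hzv]
  ring

end circ

lemma gc_hasDerivAt (t : ℝ) : HasDerivAt (gc z v) (gc' z v t) t := by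
  have h1 := (Real.hasDerivAt_cos t).smul_const z
  have h2 := (Real.hasDerivAt_sin t).smul_const v
  exact h1.add h2

/-- decomposition of the endpoint -/
lemma gc_add (a b : ℝ) :
    Real.cos a • gc z v b + Real.sin a • gc' z v b = gc z v (a + b) := by
  simp only [gc, gc', smul_add, smul_smul]
  rw [Real.cos_add, Real.sin_add]
  module

lemma gc_endpoint (θ t : ℝ) :
    Real.cos (θ - t) • gc z v t + Real.sin (θ - t) • gc' z v t = gc z v θ := by
  rw [gc_add (θ - t) t, sub_add_cancel]

variable (hF : IsAnisoNorm F)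
include hF

lemma inner_grad_gc_hasDeriv (u : Euc n) (t : ℝ) (hc : gc z v t ≠ 0) :
    HasDerivAt (fun s => ⟪gradient F (gc z v s), u⟫)
      ⟪fderiv ℝ (gradient F) (gc z v t) (gc' z v t), u⟫ t := by
  have hg : HasFDerivAt (gradient F) (fderiv ℝ (gradient F) (gc z v t)) (gc z v t) :=
    (grad_diffAt hF hc).hasFDerivAt
  have hcd := gc_hasDerivAt (z := z) (v := v) t
  have hcomp := hg.comp_hasDerivAt t hcd
  have hlin : HasFDerivAt (fun x : Euc n => ⟪x, u⟫)
      (innerSL ℝ (E := Euc n) u) (gradient F (gc z v t)) := by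
    have heq : (fun x : Euc n => ⟪x, u⟫) = ⇑(innerSL ℝ (E := Euc n) u) := by
      funext x; rw [innerSL_apply_apply, real_inner_comm]
    rw [heq]
    exact (innerSL ℝ (E := Euc n) u).hasFDerivAt
  have hcomp2 := hlin.comp_hasDerivAt t hcomp
  have heq2 : ⟪fderiv ℝ (gradient F) (gc z v t) (gc' z v t), u⟫ =
      (innerSL ℝ (E := Euc n) u) ((fderiv ℝ (gradient F) (gc z v t)) (gc' z v t)) := by
    rw [innerSL_apply_apply, real_inner_comm]
  rw [heq2]
  exact hcomp2

include hz hv hzv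

/-- Key convexity-type inequality: `⟪∇F(z), u⟫ ≤ F(u)` for `z, u` on the sphere. -/
lemma grad_monotone {θ : ℝ} (hθ0 : 0 < θ) (hθπ : θ < π) :
    ⟪gradient F z, gc z v θ⟫ ≤ F (gc z v θ) := by
  set u := gc z v θ with hu
  set B := fun t => ⟪gradient F (gc z v t), u⟫ with hB
  have hBd : ∀ t, HasDerivAt B ⟪fderiv ℝ (gradient F) (gc z v t) (gc' z v t), u⟫ t :=
    fun t => inner_grad_gc_hasDeriv hF u t (gc_ne_zero hz hv hzv t)
  have hderiv : ∀ t ∈ Set.Icc 0 θ, 0 ≤ ⟪fderiv ℝ (gradient F) (gc z v t) (gc' z v t), u⟫ := by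
    intro t ht
    have hmem := gc_mem_sphere hz hv hzv t
    have hc'z : ⟪gc' z v t, gc z v t⟫ = 0 := gc'_inner_gc hz hv hzv t
    have hc'0 : gc' z v t ≠ 0 := by
      intro h
      have := gc'_norm hz hv hzv (t := t); rw [h] at this; simp at this
    have hpos := hF.convex _ hmem _ hc'z hc'0
    have hrad : ⟪fderiv ℝ (gradient F) (gc z v t) (gc' z v t), gc z v t⟫ = 0 := by
      rw [hessian_symm hF (gc_ne_zero hz hv hzv t), hessian_radial hF (gc_ne_zero hz hv hzv t)]
      simp
    have hdecomp : u = Real.cos (θ - t) • gc z v t + Real.sin (θ - t) • gc' z v t :=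
      (gc_endpoint θ t).symm
    rw [hdecomp, inner_add_right, real_inner_smul_right, real_inner_smul_right, hrad]
    have hsin : 0 ≤ Real.sin (θ - t) := by
      apply Real.sin_nonneg_of_nonneg_of_le_pi
      · linarith [ht.2]
      · linarith [ht.1]
    nlinarith [hpos]
  have hmono : MonotoneOn B (Set.Icc 0 θ) := by
    apply monotoneOn_of_deriv_nonneg (convex_Icc 0 θ)
    · exact fun t _ => ((hBd t).continuousAt).continuousWithinAt
    · exact fun t _ => ((hBd t).differentiableAt).differentiableWithinAt
    · intro t ht
      rw [interior_Icc] at ht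
      rw [(hBd t).deriv]
      exact hderiv t ⟨ht.1.le, ht.2.le⟩
  have h01 : B 0 ≤ B θ := hmono ⟨le_refl 0, hθ0.le⟩ ⟨hθ0.le, le_refl θ⟩ hθ0.le
  have hB0 : B 0 = ⟪gradient F z, u⟫ := by
    simp [hB, gc]
  have hBθ : B θ = F u := by
    rw [hB]
    simp only []
    rw [← hu]
    exact euler hF (by rw [hu]; exact gc_ne_zero hz hv hzv θ)
  rw [← hB0, ← hBθ]; exact h01

end C

section C2
variable {n : ℕ} {F : Euc n → ℝ} (hF : IsAnisoNorm F)
open Aniso Real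
include hF

lemma grad_inner_le {z u : Euc n} (hz : z ∈ unitSphere n) (hu : u ∈ unitSphere n) :
    ⟪gradient F z, u⟫ ≤ F u := by
  have hz1 := mem_sphere_iff.1 hz
  have hu1 := mem_sphere_iff.1 hu
  have hz0 : z ≠ 0 := sphere_ne_zero hz
  by_cases hzu : u = z
  · rw [hzu]; exact le_of_eq (euler hF hz0)
  by_cases hzu' : u = -z
  · rw [hzu', inner_neg_right, euler hF hz0]
    have h1 : 0 < F z := hF.pos z hz
    have h2 : 0 < F (-z) := hF.pos (-z) (neg_mem_sphere hz)
    linarith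
  have hzz : ⟪z, z⟫ = 1 := by rw [real_inner_self_eq_norm_sq, hz1]; norm_num
  have huu : ⟪u, u⟫ = 1 := by rw [real_inner_self_eq_norm_sq, hu1]; norm_num
  set a : ℝ := ⟪z, u⟫ with ha
  have hCS : |a| ≤ 1 := by
    have := abs_real_inner_le_norm z u
    rwa [hz1, hu1, mul_one] at this
  have ha1 : a < 1 := by
    rcases lt_or_eq_of_le (abs_le.1 hCS).2 with h | h
    · exact h
    · exfalso; apply hzu
      have hn : ‖u - z‖ ^ 2 = 0 := by
        rw [norm_sub_sq_real, hz1, hu1, real_inner_comm, ← ha, h]; norm_num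
      have := pow_eq_zero_iff (n := 2) (by norm_num) |>.1 hn
      rw [norm_eq_zero, sub_eq_zero] at this
      exact this
  have ha2 : -1 < a := by
    rcases lt_or_eq_of_le (abs_le.1 hCS).1 with h | h
    · exact h
    · exfalso; apply hzu'
      have hn : ‖u + z‖ ^ 2 = 0 := by
        rw [norm_add_sq_real, hz1, hu1, real_inner_comm, ← ha, ← h]; norm_num
      have := pow_eq_zero_iff (n := 2) (by norm_num) |>.1 hn
      rw [norm_eq_zero, add_eq_zero_iff_eq_neg] at this
      exact this
  set θ := Real.arccos a with hθ
  have hθ0 : 0 < θ := Real.arccos_pos.2 ha1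
  have hθπ : θ < π := by
    refine lt_of_le_of_ne (Real.arccos_le_pi a) (fun h => ?_)
    have := Real.arccos_eq_pi.1 h
    linarith
  have hcos : Real.cos θ = a := Real.cos_arccos (by linarith) (by linarith)
  have hsin : Real.sin θ = Real.sqrt (1 - a ^ 2) := by
    rw [hθ, Real.sin_arccos]
  have hsinpos : 0 < Real.sin θ := Real.sin_pos_of_pos_of_lt_pi hθ0 hθπ
  have hdiff : ‖u - a • z‖ = Real.sin θ := by
    have : ‖u - a • z‖ ^ 2 = 1 - a ^ 2 := by
      rw [norm_sub_sq_real, norm_smul, hu1, hz1, real_inner_smul_right, real_inner_comm, ← ha]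
      simp [abs_mul]
      ring
    rw [hsin, ← this, Real.sqrt_sq (norm_nonneg _)]
  set v := (Real.sin θ)⁻¹ • (u - a • z) with hv
  have hv1 : ‖v‖ = 1 := by
    rw [hv, norm_smul, hdiff, norm_inv, Real.norm_eq_abs, abs_of_pos hsinpos]
    field_simp
  have hzv : ⟪z, v⟫ = 0 := by
    rw [hv, real_inner_smul_right, inner_sub_right, real_inner_smul_right, hzz, ← ha]
    ring
  have hgcθ : gc z v θ = u := by
    rw [gc, hv, hcos, smul_smul, mul_inv_cancel₀ (ne_of_gt hsinpos), one_smul]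
    abel_nf
  have := grad_monotone hz1 hv1 hzv hF hθ0 hθπ
  rwa [hgcθ] at this

lemma dualF_grad_le {z : Euc n} (hz : z ∈ unitSphere n) :
    dualF F (gradient F z) ≤ 1 := by
  refine dualF_le hF fun u hu => ?_
  rw [div_le_one (hF.pos u hu)]
  exact grad_inner_le hF hz hu

lemma lagrange {w m : Euc n} (hm : m ∈ unitSphere n)
    (hmax : ∀ z ∈ unitSphere n, ⟪w, z⟫ / F z ≤ ⟪w, m⟫ / F m) :
    w = (⟪w, m⟫ / F m) • gradient F m := by
  have hm1 := mem_sphere_iff.1 hm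
  have hm0 : m ≠ 0 := sphere_ne_zero hm
  have hFm : 0 < F m := hF.pos m hm
  set d' : ℝ := ⟪w, m⟫ / F m with hd'
  have key : ∀ v : Euc n, ‖v‖ = 1 → ⟪m, v⟫ = 0 →
      ⟪w, v⟫ = d' * ⟪gradient F m, v⟫ := by
    intro v hv1 hmv
    set ψ := fun t => ⟪w, gc m v t⟫ / F (gc m v t) with hψdef
    have hgc0 : gc m v 0 = m := by simp [gc]
    have hgc'0 : gc' m v 0 = v := by simp [gc']
    have hnum : HasDerivAt (fun t => ⟪w, gc m v t⟫) ⟪w, gc' m v 0⟫ 0 := by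
      have hlin : HasFDerivAt (fun x : Euc n => ⟪w, x⟫) (innerSL ℝ (E := Euc n) w) (gc m v 0) := by
        have heq : (fun x : Euc n => ⟪w, x⟫) = ⇑(innerSL ℝ (E := Euc n) w) := by
          funext x; rw [innerSL_apply_apply]
        rw [heq]; exact (innerSL ℝ (E := Euc n) w).hasFDerivAt
      have := hlin.comp_hasDerivAt 0 (gc_hasDerivAt (z := m) (v := v) 0)
      have heq2 : ⟪w, gc' m v 0⟫ = (innerSL ℝ (E := Euc n) w) (gc' m v 0) := by
        rw [innerSL_apply_apply]
      rw [heq2]; exact this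
    have hcne : gc m v 0 ≠ 0 := by rw [hgc0]; exact hm0
    have hden : HasDerivAt (fun t => F (gc m v t)) ⟪gradient F (gc m v 0), gc' m v 0⟫ 0 := by
      have := (F_hasFDeriv hF hcne).comp_hasDerivAt 0 (gc_hasDerivAt (z := m) (v := v) 0)
      rw [inner_gradient_eq]
      exact this
    have hψ : HasDerivAt ψ
        ((⟪w, gc' m v 0⟫ * F (gc m v 0) - ⟪w, gc m v 0⟫ * ⟪gradient F (gc m v 0), gc' m v 0⟫)
          / (F (gc m v 0)) ^ 2) 0 := by
      exact hnum.div hden (by rw [hgc0]; exact ne_of_gt hFm)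
    have hmax0 : IsLocalMax ψ 0 := by
      apply Filter.Eventually.of_forall
      intro t
      have := hmax (gc m v t) (gc_mem_sphere hm1 hv1 hmv t)
      simpa [hψdef, hgc0] using this
    have := hmax0.hasDerivAt_eq_zero hψ
    rw [hgc0, hgc'0] at this
    have h2 : ⟪w, v⟫ * F m - ⟪w, m⟫ * ⟪gradient F m, v⟫ = 0 := by
      rcases div_eq_zero_iff.1 this with h | h
      · exact h
      · exact absurd h (pow_ne_zero 2 (ne_of_gt hFm))
    rw [hd', div_mul_eq_mul_div, eq_div_iff (ne_of_gt hFm)]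
    linarith
  set R := w - d' • gradient F m with hR
  by_cases hR0 : R = 0
  · exact sub_eq_zero.1 hR0
  · exfalso
    set vv := ‖R‖⁻¹ • R with hvv
    have hRm : ⟪R, m⟫ = 0 := by
      rw [hR, inner_sub_left, real_inner_smul_left, euler hF hm0, hd']
      field_simp; simp
    have hmR : ⟪m, vv⟫ = 0 := by
      rw [hvv, real_inner_smul_right, real_inner_comm, hRm, mul_zero]
    have hRv : ‖vv‖ = 1 := by
      rw [hvv, norm_smul, norm_inv, norm_norm, inv_mul_cancel₀ (norm_ne_zero_iff.2 hR0)]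
    have hk := key _ hRv hmR
    have h0 : ⟪R, vv⟫ = 0 := by
      have hh : ⟪R, vv⟫ = ⟪w, vv⟫ - d' * ⟪gradient F m, vv⟫ := by
        rw [hR, inner_sub_left, real_inner_smul_left]
      rw [hh, hk]; ring
    have h1 : ⟪R, vv⟫ = ‖R‖⁻¹ * ‖R‖ ^ 2 := by
      rw [hvv, real_inner_smul_right, real_inner_self_eq_norm_sq]
    have hnz : (0:ℝ) < ‖R‖ := norm_pos_iff.2 hR0
    have hgt : (0:ℝ) < ‖R‖⁻¹ * ‖R‖ ^ 2 := by positivity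
    rw [h0] at h1
    linarith
end C2

section D
open Filter
variable {n : ℕ}

lemma cross_lemma {D : Set (Euc n)} (hDc : IsClosed D) {a b : Euc n}
    (ha : a ∈ D) (hb : b ∉ D) :
    ∃ s : ℝ, s ∈ Set.Icc (0:ℝ) 1 ∧ a + s • (b - a) ∈ frontier D := by
  set f : ℝ → Euc n := fun s => a + s • (b - a) with hf
  have hfc : Continuous f := by
    apply continuous_const.add (continuous_id.smul continuous_const)
  have hf0 : f 0 = a := by simp [hf]
  have hf1 : f 1 = b := by simp [hf]
  set T : Set ℝ := {s | s ∈ Set.Icc (0:ℝ) 1 ∧ f s ∉ D} with hT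
  have hT1 : (1:ℝ) ∈ T := ⟨⟨zero_le_one, le_refl 1⟩, by rw [hf1]; exact hb⟩
  have hTne : T.Nonempty := ⟨1, hT1⟩
  have hTbdd : BddBelow T := ⟨0, fun s hs => hs.1.1⟩
  set s' : ℝ := sInf T with hs'
  have hs'0 : 0 ≤ s' := le_csInf hTne (fun s hs => hs.1.1)
  have hs'1 : s' ≤ 1 := csInf_le hTbdd hT1
  refine ⟨s', ⟨hs'0, hs'1⟩, ?_⟩
  have hq1 : f s' ∈ closure Dᶜ := by
    rw [Metric.mem_closure_iff]
    intro ε hε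
    obtain ⟨δ, hδ, hδc⟩ := Metric.continuous_iff.1 hfc s' ε hε
    have : ∃ s ∈ T, s < s' + δ := by
      by_contra hc
      push_neg at hc
      have : s' + δ ≤ s' := le_csInf hTne hc
      linarith
    obtain ⟨s, hsT, hss⟩ := this
    have hs's : s' ≤ s := csInf_le hTbdd hsT
    refine ⟨f s, hsT.2, ?_⟩
    rw [dist_comm]
    have hdist : dist s s' < δ := by
      rw [Real.dist_eq, abs_lt]
      exact ⟨by linarith, by linarith⟩
    exact hδc s hdist
  have hq2 : f s' ∈ D := by
    rcases eq_or_lt_of_le hs'0 with h | h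
    · rw [← h, hf0]; exact ha
    · -- approximate from below
      have : f s' ∈ closure D := by
        rw [Metric.mem_closure_iff]
        intro ε hε
        obtain ⟨δ, hδ, hδc⟩ := Metric.continuous_iff.1 hfc s' ε hε
        set s := s' - min δ s' / 2 with hsdef
        have h1 : 0 < min δ s' := lt_min hδ h
        have hlt : s < s' := by rw [hsdef]; linarith
        have hge : 0 ≤ s := by
          rw [hsdef]
          have : min δ s' ≤ s' := min_le_right _ _
          linarith
        have hsD : f s ∈ D := by
          by_contra hc
          have : s ∈ T := ⟨⟨hge, by linarith⟩, hc⟩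
          have := csInf_le hTbdd this
          linarith
        refine ⟨f s, hsD, ?_⟩
        rw [dist_comm]
        have hminδ : min δ s' ≤ δ := min_le_left _ _
        have hdist : dist s s' < δ := by
          rw [Real.dist_eq, abs_lt]
          exact ⟨by rw [hsdef]; linarith, by rw [hsdef]; linarith⟩
        exact hδc s hdist
      rwa [hDc.closure_eq] at this
  rw [frontier_eq_closure_inter_closure, hDc.closure_eq]
  exact ⟨hq2, hq1⟩

lemma mem_tangentCone_of_seq {M : Set (Euc n)} {p u : Euc n} {q : ℕ → Euc n}
    (hqM : ∀ k, q k ∈ M) (hqp : ∀ k, q k ≠ p)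
    (hq : Tendsto q atTop (nhds p))
    (hdir : Tendsto (fun k => (‖q k - p‖)⁻¹ • (q k - p)) atTop (nhds u)) :
    u ∈ tangentConeAt ℝ M p := by
  rw [mem_tangentConeAt_iff_exists_seq_norm_tendsto_atTop]
  refine ⟨fun k => (‖q k - p‖)⁻¹, fun k => q k - p, ?_, ?_, ?_⟩
  swap
  · exact Eventually.of_forall fun k => by simpa using hqM k
  · have h0 : Tendsto (fun k => ‖q k - p‖) atTop (nhdsWithin 0 (Set.Ioi 0)) := by
      apply tendsto_nhdsWithin_of_tendsto_nhds_of_eventually_within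
      · exact (tendsto_norm_sub_self p).comp hq
      · exact Eventually.of_forall fun k => by
          simp only [Set.mem_Ioi]
          exact norm_pos_iff.2 (sub_ne_zero.2 (hqp k))
    have := h0.inv_tendsto_nhdsGT_zero
    apply this.congr
    intro k
    simp [abs_of_nonneg]
  · exact hdir

lemma frontier_subset_self {D : Set (Euc n)} (hDc : IsClosed D) : frontier D ⊆ D := by
  rw [frontier_eq_closure_inter_closure, hDc.closure_eq]
  exact Set.inter_subset_left

lemma frontier_mem_closure_compl {D : Set (Euc n)} {p : Euc n} (hp : p ∈ frontier D) :
    p ∈ closure Dᶜ := by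
  rw [frontier_eq_closure_inter_closure] at hp
  exact hp.2

end D

section E
open Filter
variable {n : ℕ}

/-- If `γ` is a limit direction of points outside `D` at `p`, and `e` is a unit direction
entering `D` at `p`, with `γ ≠ -e`, then some unit nonnegative combination of `γ` and `e`
is a tangent direction of `frontier D` at `p`. -/
lemma norm_smul_unit {a : ℝ} {x : Euc n} (ha : 0 ≤ a) (hx : ‖x‖ = 1) :
    ‖a • x‖ = a := by
  rw [norm_smul, hx, mul_one, Real.norm_eq_abs, abs_of_nonneg ha]

set_option maxHeartbeats 1000000 in
lemma cross_dir {D : Set (Euc n)} (hDc : IsClosed D) {p e : Euc n} (he : ‖e‖ = 1)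
    {t₀ : ℝ} (ht₀ : 0 < t₀) (heint : ∀ t ∈ Set.Ioc (0:ℝ) t₀, p + t • e ∈ D)
    {c : ℕ → Euc n} (hcD : ∀ k, c k ∉ D) (hcp : Tendsto c atTop (nhds p))
    (hcne : ∀ k, c k ≠ p) {γ : Euc n}
    (hγ : Tendsto (fun k => (‖c k - p‖)⁻¹ • (c k - p)) atTop (nhds γ))
    (hne : γ ≠ -e) :
    ∃ u ∈ tangentConeAt ℝ (frontier D) p, ‖u‖ = 1 ∧
      ∃ lam mu : ℝ, 0 ≤ lam ∧ 0 ≤ mu ∧ u = lam • γ + mu • e := by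
  classical
  set γs : ℕ → Euc n := fun k => (‖c k - p‖)⁻¹ • (c k - p) with hγs
  have hγs1 : ∀ k, ‖γs k‖ = 1 := by
    intro k
    rw [hγs]
    simp only [norm_smul, norm_inv, norm_norm]
    rw [inv_mul_cancel₀ (norm_ne_zero_iff.2 (sub_ne_zero.2 (hcne k)))]
  have hγ1 : ‖γ‖ = 1 := by
    have h1 : Tendsto (fun k => ‖γs k‖) atTop (nhds ‖γ‖) := (continuous_norm.tendsto γ).comp hγ
    have h2 : Tendsto (fun k => ‖γs k‖) atTop (nhds 1) := by
      apply Tendsto.congr (fun k => (hγs1 k).symm)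
      exact tendsto_const_nhds
    exact tendsto_nhds_unique h1 h2
  have hinner_lim : Tendsto (fun k => ⟪γs k, e⟫) atTop (nhds ⟪γ, e⟫) :=
    (Continuous.tendsto (continuous_id.inner continuous_const) γ).comp hγ
  have hγe : -1 < ⟪γ, e⟫ := by
    have hge : -1 ≤ ⟪γ, e⟫ := by
      have h := real_inner_le_norm γ (-e)
      rw [inner_neg_right, norm_neg, hγ1, he, mul_one] at h
      linarith
    rcases lt_or_eq_of_le hge with h | h
    · exact h
    · exfalso
      apply hne
      have h2 : ‖γ + e‖ ^ 2 = 0 := by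
        rw [norm_add_sq_real, hγ1, he, ← h]; norm_num
      have := pow_eq_zero_iff (n := 2) (by norm_num) |>.1 h2
      rw [norm_eq_zero, add_eq_zero_iff_eq_neg] at this
      exact this
  set c₀ : ℝ := 1 + ⟪γ, e⟫ with hc₀
  have hc₀pos : 0 < c₀ := by rw [hc₀]; linarith
  have hc₀le : c₀ ≤ 2 := by
    rw [hc₀]
    have h := real_inner_le_norm γ e
    rw [hγ1, he, mul_one] at h
    linarith
  have hev : ∀ᶠ k in atTop, -1 + c₀ / 2 < ⟪γs k, e⟫ := by
    apply hinner_lim.eventually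
    apply eventually_gt_nhds
    rw [hc₀]; linarith
  obtain ⟨N, hN⟩ := eventually_atTop.1 hev
  set c' : ℕ → Euc n := fun k => c (k + N) with hc'
  have hc'D : ∀ k, c' k ∉ D := fun k => hcD _
  have hc'ne : ∀ k, c' k ≠ p := fun k => hcne _
  have hshift : Tendsto (fun k : ℕ => k + N) atTop atTop := tendsto_add_atTop_nat N
  have hc'p : Tendsto c' atTop (nhds p) := hcp.comp hshift
  set γ2 : ℕ → Euc n := fun k => γs (k + N) with hγ2
  have hγ2t : Tendsto γ2 atTop (nhds γ) := hγ.comp hshift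
  have hγ2b : ∀ k, -1 + c₀ / 2 < ⟪γ2 k, e⟫ := fun k => hN _ (Nat.le_add_left N k)
  have hγ2n : ∀ k, ‖γ2 k‖ = 1 := fun k => hγs1 _
  set tk : ℕ → ℝ := fun k => min t₀ ‖c' k - p‖ with htk
  have htkpos : ∀ k, 0 < tk k := fun k =>
    lt_min ht₀ (norm_pos_iff.2 (sub_ne_zero.2 (hc'ne k)))
  have htk0 : Tendsto tk atTop (nhds 0) := by
    apply squeeze_zero (fun k => (htkpos k).le) (fun k => min_le_right _ _)
    exact (tendsto_norm_sub_self p).comp hc'p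
  have hak : ∀ k, p + tk k • e ∈ D := fun k =>
    heint _ ⟨htkpos k, min_le_left _ _⟩
  have hcross : ∀ k, ∃ s : ℝ, s ∈ Set.Icc (0:ℝ) 1 ∧
      (p + tk k • e) + s • (c' k - (p + tk k • e)) ∈ frontier D :=
    fun k => cross_lemma hDc (hak k) (hc'D k)
  choose sk hsk hqk using hcross
  set q : ℕ → Euc n := fun k => (p + tk k • e) + sk k • (c' k - (p + tk k • e)) with hq
  set lamk : ℕ → ℝ := fun k => sk k * ‖c' k - p‖ with hlamk
  set muk : ℕ → ℝ := fun k => (1 - sk k) * tk k with hmuk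
  have hlampos : ∀ k, 0 ≤ lamk k := fun k => mul_nonneg (hsk k).1 (norm_nonneg _)
  have hmupos : ∀ k, 0 ≤ muk k := fun k =>
    mul_nonneg (by linarith [(hsk k).2]) (htkpos k).le
  have hqdecomp : ∀ k, q k - p = lamk k • γ2 k + muk k • e := by
    intro k
    have hnz : ‖c' k - p‖ ≠ 0 := norm_ne_zero_iff.2 (sub_ne_zero.2 (hc'ne k))
    have h1 : lamk k • γ2 k = sk k • (c' k - p) := by
      show (sk k * ‖c' k - p‖) • ((‖c (k + N) - p‖)⁻¹ • (c (k + N) - p)) = sk k • (c' k - p)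
      rw [show c (k + N) = c' k from rfl, smul_smul, mul_assoc,
        mul_inv_cancel₀ hnz, mul_one]
    rw [h1, hmuk, hq]
    simp only []
    module
  have hqsum : ∀ k, ‖q k - p‖ ≤ lamk k + muk k := by
    intro k
    rw [hqdecomp k]
    calc ‖lamk k • γ2 k + muk k • e‖ ≤ ‖lamk k • γ2 k‖ + ‖muk k • e‖ := norm_add_le _ _
    _ = lamk k + muk k := by
        rw [norm_smul_unit (hlampos k) (hγ2n k), norm_smul_unit (hmupos k) he]
  have hqlow : ∀ k, (c₀ / 4) * (lamk k + muk k) ^ 2 ≤ ‖q k - p‖ ^ 2 := by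
    intro k
    rw [hqdecomp k, norm_add_sq_real,
      norm_smul_unit (hlampos k) (hγ2n k), norm_smul_unit (hmupos k) he,
      real_inner_smul_left, real_inner_smul_right]
    have hb := hγ2b k
    nlinarith [sq_nonneg (lamk k - muk k), hlampos k, hmupos k,
      mul_nonneg (hlampos k) (hmupos k)]
  have hqne : ∀ k, q k ≠ p := by
    intro k h
    have h0 : ‖q k - p‖ ^ 2 = 0 := by rw [h]; simp
    have h1 := hqlow k
    rw [h0] at h1
    have h2 : (lamk k + muk k) ^ 2 ≤ 0 := by
      by_contra hc
      push_neg at hc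
      nlinarith
    have h3 : lamk k + muk k = 0 := by nlinarith [hlampos k, hmupos k]
    have h4 : lamk k = 0 := by linarith [hlampos k, hmupos k]
    have h5 : muk k = 0 := by linarith [hlampos k, hmupos k]
    rw [hlamk] at h4
    have hnz : ‖c' k - p‖ ≠ 0 := norm_ne_zero_iff.2 (sub_ne_zero.2 (hc'ne k))
    have hsk0 : sk k = 0 := by
      rcases mul_eq_zero.1 h4 with h | h
      · exact h
      · exact absurd h hnz
    rw [hmuk] at h5
    simp only [hsk0] at h5
    rw [sub_zero, one_mul] at h5
    exact absurd h5 (ne_of_gt (htkpos k))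
  have hNpos : ∀ k, 0 < ‖q k - p‖ := fun k => norm_pos_iff.2 (sub_ne_zero.2 (hqne k))
  set K : ℝ := Real.sqrt (4 / c₀) with hK
  set lam' : ℕ → ℝ := fun k => lamk k * (‖q k - p‖)⁻¹ with hlam'
  set mu' : ℕ → ℝ := fun k => muk k * (‖q k - p‖)⁻¹ with hmu'
  have hbound : ∀ k, lam' k ∈ Set.Icc (0:ℝ) K ∧ mu' k ∈ Set.Icc (0:ℝ) K := by
    intro k
    have hNk := hNpos k
    have hle : ∀ x : ℝ, 0 ≤ x → x ≤ lamk k + muk k → x * (‖q k - p‖)⁻¹ ≤ K := by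
      intro x hx hxle
      have h1 : x ^ 2 ≤ (4 / c₀) * ‖q k - p‖ ^ 2 := by
        have h2 := hqlow k
        have h3 : x ^ 2 ≤ (lamk k + muk k) ^ 2 := by nlinarith [hlampos k, hmupos k]
        have hid : (4 / c₀) * ((c₀ / 4) * (lamk k + muk k) ^ 2) = (lamk k + muk k) ^ 2 := by
          field_simp
        have h4 : (4 / c₀) * ((c₀ / 4) * (lamk k + muk k) ^ 2) ≤ (4 / c₀) * ‖q k - p‖ ^ 2 := by
          apply mul_le_mul_of_nonneg_left h2
          positivity
        rw [hid] at h4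
        linarith
      have h4 : x ≤ K * ‖q k - p‖ := by
        have h5 : x = Real.sqrt (x ^ 2) := (Real.sqrt_sq hx).symm
        rw [h5, hK]
        calc Real.sqrt (x ^ 2) ≤ Real.sqrt ((4 / c₀) * ‖q k - p‖ ^ 2) := Real.sqrt_le_sqrt h1
        _ = Real.sqrt (4 / c₀) * ‖q k - p‖ := by
            rw [Real.sqrt_mul (by positivity), Real.sqrt_sq (norm_nonneg _)]
      rw [← div_eq_mul_inv, div_le_iff₀ hNk]
      linarith [h4]
    refine ⟨⟨mul_nonneg (hlampos k) (by positivity), ?_⟩,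
            ⟨mul_nonneg (hmupos k) (by positivity), ?_⟩⟩
    · exact hle _ (hlampos k) (by linarith [hmupos k])
    · exact hle _ (hmupos k) (by linarith [hlampos k])
  obtain ⟨lam0, hlam0K, φ₁, hφ₁m, hφ₁t⟩ :=
    isCompact_Icc.tendsto_subseq (fun k => (hbound k).1)
  obtain ⟨mu0, hmu0K, φ₂, hφ₂m, hφ₂t⟩ :=
    isCompact_Icc.tendsto_subseq (fun k => (hbound (φ₁ k)).2)
  set φ : ℕ → ℕ := φ₁ ∘ φ₂ with hφ
  have hφt : Tendsto φ atTop atTop := (hφ₁m.comp hφ₂m).tendsto_atTop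
  have hlamt : Tendsto (fun k => lam' (φ k)) atTop (nhds lam0) :=
    hφ₁t.comp hφ₂m.tendsto_atTop
  have hmut : Tendsto (fun k => mu' (φ k)) atTop (nhds mu0) := hφ₂t
  -- directions tend to u
  set u : Euc n := lam0 • γ + mu0 • e with hu
  have hdirs : ∀ k, (‖q k - p‖)⁻¹ • (q k - p) = lam' k • γ2 k + mu' k • e := by
    intro k
    calc (‖q k - p‖)⁻¹ • (q k - p)
        = (‖q k - p‖)⁻¹ • (lamk k • γ2 k + muk k • e) := by rw [hqdecomp k]
    _ = (lamk k * (‖q k - p‖)⁻¹) • γ2 k + (muk k * (‖q k - p‖)⁻¹) • e := by module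
    _ = lam' k • γ2 k + mu' k • e := rfl
  have hγ2φ : Tendsto (fun k => γ2 (φ k)) atTop (nhds γ) := hγ2t.comp hφt
  have hdirt : Tendsto (fun k => (‖q (φ k) - p‖)⁻¹ • (q (φ k) - p)) atTop (nhds u) := by
    have h1 : Tendsto (fun k => lam' (φ k) • γ2 (φ k)) atTop (nhds (lam0 • γ)) :=
      hlamt.smul hγ2φ
    have h2 : Tendsto (fun k => mu' (φ k) • e) atTop (nhds (mu0 • e)) :=
      hmut.smul tendsto_const_nhds
    have := h1.add h2
    apply Tendsto.congr (fun k => (hdirs (φ k)).symm)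
    exact this
  have hqp : Tendsto (fun k => q (φ k)) atTop (nhds p) := by
    have h0 : Tendsto (fun k => ‖q k - p‖) atTop (nhds 0) := by
      have h1 : Tendsto lamk atTop (nhds 0) := by
        have hub : ∀ k, lamk k ≤ ‖c' k - p‖ := by
          intro k
          have h := (hsk k).2
          show sk k * ‖c' k - p‖ ≤ ‖c' k - p‖
          nlinarith [norm_nonneg (c' k - p)]
        exact squeeze_zero (fun k => hlampos k) hub ((tendsto_norm_sub_self p).comp hc'p)
      have h2 : Tendsto muk atTop (nhds 0) := by
        have hub : ∀ k, muk k ≤ tk k := by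
          intro k
          have h := (hsk k).1
          show (1 - sk k) * tk k ≤ tk k
          nlinarith [(htkpos k).le]
        exact squeeze_zero (fun k => hmupos k) hub htk0
      have h3 := h1.add h2
      rw [add_zero] at h3
      exact squeeze_zero (fun k => norm_nonneg _) hqsum h3
    have h2 := h0.comp hφt
    rw [tendsto_iff_dist_tendsto_zero]
    apply Tendsto.congr (fun k => ?_) h2
    rw [dist_eq_norm]
    rfl
  have humem : u ∈ tangentConeAt ℝ (frontier D) p :=
    mem_tangentCone_of_seq (fun k => hqk (φ k)) (fun k => hqne (φ k)) hqp hdirt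
  have hun : ‖u‖ = 1 := by
    have h1 : Tendsto (fun k => ‖(‖q (φ k) - p‖)⁻¹ • (q (φ k) - p)‖) atTop (nhds ‖u‖) :=
      (continuous_norm.tendsto u).comp hdirt
    have h2 : ∀ k, ‖(‖q (φ k) - p‖)⁻¹ • (q (φ k) - p)‖ = 1 := by
      intro k
      rw [norm_smul, norm_inv, norm_norm, inv_mul_cancel₀ (ne_of_gt (hNpos (φ k)))]
    have h3 : Tendsto (fun k => ‖(‖q (φ k) - p‖)⁻¹ • (q (φ k) - p)‖) atTop (nhds 1) := by
      apply Tendsto.congr (fun k => (h2 k).symm)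
      exact tendsto_const_nhds
    exact tendsto_nhds_unique h1 h3
  exact ⟨u, humem, hun, lam0, mu0, hlam0K.1, hmu0K.1, rfl⟩

end E

section E2
open Filter
variable {n : ℕ}

lemma dir_orth {D : Set (Euc n)} (hDc : IsClosed D) {p ν₀ δ : Euc n}
    (hν₁ : ‖ν₀‖ = 1)
    (horth : ∀ u ∈ tangentConeAt ℝ (frontier D) p, ⟪ν₀, u⟫ = 0)
    {ε : ℝ} (hε : 0 < ε) (hνint : ∀ t ∈ Set.Ioo (0:ℝ) ε, p + t • ν₀ ∈ interior D)
    (hδν : ⟪δ, ν₀⟫ < 0)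
    (hδint : ∀ t ∈ Set.Ioc (0:ℝ) 1, p + t • δ ∈ interior D)
    {c : ℕ → Euc n} (hcD : ∀ k, c k ∉ D) (hcp : Tendsto c atTop (nhds p))
    (hcne : ∀ k, c k ≠ p) {γ : Euc n}
    (hγ : Tendsto (fun k => (‖c k - p‖)⁻¹ • (c k - p)) atTop (nhds γ)) :
    ⟪γ, ν₀⟫ = 0 := by
  have hνint' : ∀ t ∈ Set.Ioc (0:ℝ) (ε/2), p + t • ν₀ ∈ D := by
    intro t ht
    exact interior_subset (hνint t ⟨ht.1, by linarith [ht.2]⟩)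
  -- Stage 1 : ⟪γ, ν₀⟫ ≤ 0
  have hle : ⟪γ, ν₀⟫ ≤ 0 := by
    by_cases hγν : γ = -ν₀
    · rw [hγν, inner_neg_left, real_inner_self_eq_norm_sq, hν₁]
      norm_num
    · obtain ⟨u, hu, hun, lam, mu, hlam, hmu, hueq⟩ :=
        cross_dir hDc hν₁ (by linarith : (0:ℝ) < ε/2) hνint' hcD hcp hcne hγ hγν
      have h0 := horth u hu
      rw [hueq, inner_add_right, real_inner_smul_right, real_inner_smul_right,
        real_inner_self_eq_norm_sq, hν₁] at h0
      by_contra hc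
      push_neg at hc
      have hpos : 0 < ⟪ν₀, γ⟫ := by rwa [real_inner_comm]
      have h1 : 0 ≤ lam * ⟪ν₀, γ⟫ := mul_nonneg hlam hpos.le
      have h2 : mu * 1 ^ 2 = mu := by norm_num
      rw [h2] at h0
      have hmu0 : mu = 0 := by linarith
      have hlam0 : lam * ⟪ν₀, γ⟫ = 0 := by linarith
      have hlam0' : lam = 0 := by
        rcases mul_eq_zero.1 hlam0 with h | h
        · exact h
        · exact absurd h (ne_of_gt hpos)
      rw [hueq, hlam0', hmu0, zero_smul, zero_smul, add_zero] at hun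
      simp at hun
  -- Stage 2 : equality
  rcases lt_or_eq_of_le hle with hlt | heq
  · exfalso
    have hδ0 : δ ≠ 0 := by
      intro h; rw [h] at hδν; simp at hδν
    set eh : Euc n := (‖δ‖)⁻¹ • δ with heh
    have heh1 : ‖eh‖ = 1 := by
      rw [heh, norm_smul, norm_inv, norm_norm, inv_mul_cancel₀ (norm_ne_zero_iff.2 hδ0)]
    have hehν : ⟪eh, ν₀⟫ < 0 := by
      rw [heh, real_inner_smul_left]
      apply mul_neg_of_pos_of_neg _ hδν
      rw [inv_pos]
      exact norm_pos_iff.2 hδ0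
    have hγeh : γ ≠ -eh := by
      intro h
      rw [h, inner_neg_left] at hlt
      linarith
    have hehint : ∀ t ∈ Set.Ioc (0:ℝ) ‖δ‖, p + t • eh ∈ D := by
      intro t ht
      have : p + t • eh = p + (t * (‖δ‖)⁻¹) • δ := by
        rw [heh, smul_smul]
      rw [this]
      apply interior_subset
      apply hδint
      constructor
      · exact mul_pos ht.1 (inv_pos.2 (norm_pos_iff.2 hδ0))
      · rw [← div_eq_mul_inv, div_le_one (norm_pos_iff.2 hδ0)]
        exact ht.2
    obtain ⟨u, hu, hun, lam, mu, hlam, hmu, hueq⟩ :=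
      cross_dir hDc heh1 (norm_pos_iff.2 hδ0) hehint hcD hcp hcne hγ hγeh
    have h0 := horth u hu
    rw [hueq, inner_add_right, real_inner_smul_right, real_inner_smul_right] at h0
    have hγν' : ⟪ν₀, γ⟫ < 0 := by rwa [real_inner_comm]
    have hehν' : ⟪ν₀, eh⟫ < 0 := by rwa [real_inner_comm]
    have h1 : lam * ⟪ν₀, γ⟫ ≤ 0 := mul_nonpos_of_nonneg_of_nonpos hlam hγν'.le
    have h2 : mu * ⟪ν₀, eh⟫ ≤ 0 := mul_nonpos_of_nonneg_of_nonpos hmu hehν'.le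
    have hmu0 : mu = 0 := by
      by_contra hc
      have : 0 < mu := lt_of_le_of_ne hmu (Ne.symm hc)
      nlinarith
    have hlam0 : lam = 0 := by
      by_contra hc
      have : 0 < lam := lt_of_le_of_ne hlam (Ne.symm hc)
      nlinarith
    rw [hueq, hlam0, hmu0, zero_smul, zero_smul, add_zero] at hun
    simp at hun
  · exact heq

lemma slab_lemma {D : Set (Euc n)} (hDc : IsClosed D) {p ν₀ δ : Euc n}
    (hν₁ : ‖ν₀‖ = 1)
    (horth : ∀ u ∈ tangentConeAt ℝ (frontier D) p, ⟪ν₀, u⟫ = 0)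
    {ε : ℝ} (hε : 0 < ε) (hνint : ∀ t ∈ Set.Ioo (0:ℝ) ε, p + t • ν₀ ∈ interior D)
    (hδν : ⟪δ, ν₀⟫ < 0)
    (hδint : ∀ t ∈ Set.Ioc (0:ℝ) 1, p + t • δ ∈ interior D)
    {α : ℝ} (hα : 0 < α) :
    ∃ r > 0, ∀ x, x ∉ D → ‖x - p‖ < r → |⟪x - p, ν₀⟫| ≤ α * ‖x - p‖ := by
  by_contra hc
  push_neg at hc
  have hex : ∀ k : ℕ, ∃ x, x ∉ D ∧ ‖x - p‖ < 1 / (k + 1) ∧ α * ‖x - p‖ < |⟪x - p, ν₀⟫| := by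
    intro k
    obtain ⟨x, hx1, hx2, hx3⟩ := hc (1 / (k + 1)) (by positivity)
    exact ⟨x, hx1, hx2, hx3⟩
  choose c hcD hcr hcin using hex
  have hcne : ∀ k, c k ≠ p := by
    intro k h
    have := hcin k
    rw [h] at this
    simp at this
  have hcp : Tendsto c atTop (nhds p) := by
    rw [tendsto_iff_dist_tendsto_zero]
    have hd : ∀ k : ℕ, dist (c k) p ≤ 1 / (k + 1) := by
      intro k; rw [dist_eq_norm]; exact (hcr k).le
    exact squeeze_zero (fun k => dist_nonneg) hd tendsto_one_div_add_atTop_nhds_zero_nat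
  set dirs : ℕ → Euc n := fun k => (‖c k - p‖)⁻¹ • (c k - p) with hdirs
  have hdirs_mem : ∀ k, dirs k ∈ sphere (0 : Euc n) 1 := by
    intro k
    rw [mem_sphere_zero_iff_norm, hdirs]
    simp only [norm_smul, norm_inv, norm_norm]
    rw [inv_mul_cancel₀ (norm_ne_zero_iff.2 (sub_ne_zero.2 (hcne k)))]
  obtain ⟨γ, hγmem, φ, hφ, hφt⟩ := (isCompact_sphere (0 : Euc n) 1).tendsto_subseq hdirs_mem
  have horthγ : ⟪γ, ν₀⟫ = 0 := by
    apply dir_orth hDc hν₁ horth hε hνint hδν hδint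
      (c := fun k => c (φ k)) (fun k => hcD _) (hcp.comp hφ.tendsto_atTop) (fun k => hcne _)
    exact hφt
  have hlim : Tendsto (fun k => |⟪dirs (φ k), ν₀⟫|) atTop (nhds |⟪γ, ν₀⟫|) := by
    have h1 : Continuous fun x : Euc n => |⟪x, ν₀⟫| :=
      (continuous_id.inner continuous_const).abs
    exact (h1.tendsto γ).comp hφt
  have hlow : ∀ k, α ≤ |⟪dirs (φ k), ν₀⟫| := by
    intro k
    have h1 := hcin (φ k)
    have h2 : 0 < ‖c (φ k) - p‖ := norm_pos_iff.2 (sub_ne_zero.2 (hcne (φ k)))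
    rw [hdirs]
    simp only [real_inner_smul_left]
    rw [abs_mul, abs_of_nonneg (inv_nonneg.2 (norm_nonneg _)), inv_mul_eq_div,
      le_div_iff₀ h2]
    exact (h1).le
  have : α ≤ |⟪γ, ν₀⟫| := le_of_tendsto_of_tendsto tendsto_const_nhds hlim
    (Eventually.of_forall hlow)
  rw [horthγ] at this
  simp at this
  linarith

end E2

section E3
open Filter
variable {n : ℕ}

set_option maxHeartbeats 1000000 in
lemma main_contra {D : Set (Euc n)} (hD : IsCompact D) {ν : Euc n → Euc n}
    (hν : ∀ p ∈ frontier D, IsInnerUnitNormalAt D (frontier D) p (ν p))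
    (hsm : ContDiffOn ℝ (⊤ : ℕ∞) ν (frontier D))
    {p δ : Euc n} (hp : p ∈ frontier D)
    (hδν : ⟪δ, ν p⟫ < 0)
    (hδint : ∀ t ∈ Set.Ioc (0:ℝ) 1, p + t • δ ∈ interior D) : False := by
  classical
  have hDc : IsClosed D := hD.isClosed
  obtain ⟨hν₁, horth, ε, hε, hνint⟩ := hν p hp
  set ν₀ : Euc n := ν p with hν₀def
  have hνint' : ∀ t ∈ Set.Ioo (0:ℝ) ε, p + t • ν₀ ∈ interior D := fun t ht => hνint t ht
  -- slab with α = 1/4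
  obtain ⟨r, hr, hslab⟩ := slab_lemma hDc hν₁ horth hε hνint' hδν hδint
    (α := 1/4) (by norm_num)
  -- continuity of ν within the frontier at p
  have hcont : ContinuousWithinAt ν (frontier D) p := (hsm.continuousOn) p hp
  obtain ⟨r₂, hr₂, hcont₂⟩ := Metric.continuousWithinAt_iff.1 hcont (1/8) (by norm_num)
  -- pick c outside D close to p
  have hpfr : p ∈ closure Dᶜ := frontier_mem_closure_compl hp
  set r₃ : ℝ := min (r / 4) (r₂ / 4) with hr₃
  have hr₃pos : 0 < r₃ := lt_min (by linarith) (by linarith)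
  obtain ⟨c, hcDc, hcd⟩ := Metric.mem_closure_iff.1 hpfr r₃ hr₃pos
  have hcD : c ∉ D := hcDc
  have hcp : c ≠ p := by
    intro h
    rw [h] at hcD
    exact hcD (frontier_subset_self hDc hp)
  have hcpn : 0 < ‖c - p‖ := norm_pos_iff.2 (sub_ne_zero.2 hcp)
  have hcr : ‖c - p‖ < r₃ := by
    rw [← dist_eq_norm, dist_comm]
    exact hcd
  have hcr1 : ‖c - p‖ < r / 4 := lt_of_lt_of_le hcr (min_le_left _ _)
  have hcr2 : ‖c - p‖ < r₂ / 4 := lt_of_lt_of_le hcr (min_le_right _ _)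
  set η : ℝ := ‖c - p‖ with hη
  have hηpos : 0 < η := hcpn
  have hνν : ⟪ν₀, ν₀⟫ = 1 := by
    rw [real_inner_self_eq_norm_sq, hν₁]; norm_num
  -- the point x below c is in the interior
  have hslab_c : |⟪c - p, ν₀⟫| ≤ (1/4) * ‖c - p‖ := hslab c hcD (by linarith)
  set W : Set (Euc n) := {z | ‖z - p‖ < r ∧ ⟪z - p, ν₀⟫ < -(1/4) * ‖z - p‖} with hW
  have hWopen : IsOpen W := by
    have hc1 : Continuous fun z : Euc n => ‖z - p‖ :=
      (continuous_id.sub continuous_const).norm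
    have h1 : IsOpen {z : Euc n | ‖z - p‖ < r} := isOpen_lt hc1 continuous_const
    have h2 : IsOpen {z : Euc n | ⟪z - p, ν₀⟫ < -(1/4) * ‖z - p‖} :=
      isOpen_lt ((continuous_id.sub continuous_const).inner continuous_const)
        (continuous_const.mul hc1)
    exact h1.and h2
  have hWD : W ⊆ interior D := by
    apply interior_maximal _ hWopen
    intro z hz
    by_contra hzD
    have h1 := hslab z hzD hz.1
    have h2 := hz.2
    have h3 : 0 < ‖z - p‖ := by
      rcases eq_or_lt_of_le (norm_nonneg (z - p)) with h | h
      · exfalso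
        rw [← h] at h2
        have : ⟪z - p, ν₀⟫ = 0 := by
          have : z - p = 0 := by
            rw [← norm_eq_zero]; exact h.symm
          rw [this, inner_zero_left]
        rw [this] at h2
        norm_num at h2
      · exact h
    have h4 : (1/4) * ‖z - p‖ < |⟪z - p, ν₀⟫| := by
      rw [abs_of_nonpos (by nlinarith)]
      nlinarith
    linarith
  -- x = c - η • ν₀ lies in W
  set x : Euc n := c - η • ν₀ with hx
  have hxp : x - p = (c - p) - η • ν₀ := by rw [hx]; module
  have hxin : ⟪x - p, ν₀⟫ ≤ -(3/4) * ‖c - p‖ := by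
    rw [hxp, inner_sub_left, real_inner_smul_left, hνν, mul_one]
    have := abs_le.1 hslab_c
    rw [hη]
    linarith [this.2]
  have hxnorm : ‖x - p‖ ≤ 2 * ‖c - p‖ := by
    rw [hxp]
    calc ‖(c - p) - η • ν₀‖ ≤ ‖c - p‖ + ‖η • ν₀‖ := norm_sub_le _ _
    _ = ‖c - p‖ + η := by
        rw [norm_smul, hν₁, mul_one, Real.norm_eq_abs, abs_of_pos hηpos]
    _ = 2 * ‖c - p‖ := by rw [hη]; ring
  have hxW : x ∈ W := by
    constructor
    · calc ‖x - p‖ ≤ 2 * ‖c - p‖ := hxnorm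
      _ < r := by linarith
    · calc ⟪x - p, ν₀⟫ ≤ -(3/4) * ‖c - p‖ := hxin
      _ < -(1/4) * ‖x - p‖ := by nlinarith
  have hxD : x ∈ D := interior_subset (hWD hxW)
  -- first return point q below c
  set T : Set ℝ := {s | s ∈ Set.Icc (0:ℝ) η ∧ c - s • ν₀ ∈ D} with hT
  have hTc : IsClosed T := by
    apply IsClosed.inter isClosed_Icc
    exact hDc.preimage (continuous_const.sub (continuous_id.smul continuous_const))
  have hTne : T.Nonempty := ⟨η, ⟨⟨hηpos.le, le_refl _⟩, by rw [← hx]; exact hxD⟩⟩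
  have hTb : BddBelow T := ⟨0, fun s hs => hs.1.1⟩
  set S : ℝ := sInf T with hS
  have hST : S ∈ T := hTc.csInf_mem hTne hTb
  set q : Euc n := c - S • ν₀ with hq
  have hqD : q ∈ D := hST.2
  have hS0 : 0 < S := by
    rcases eq_or_lt_of_le hST.1.1 with h | h
    · exfalso
      apply hcD
      have : q = c := by rw [hq, ← h, zero_smul, sub_zero]
      rw [← this]; exact hqD
    · exact h
  have hSη : S ≤ η := hST.1.2
  have hbelow : ∀ s, 0 ≤ s → s < S → c - s • ν₀ ∉ D := by
    intro s hs0 hsS hsD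
    have : s ∈ T := ⟨⟨hs0, by linarith⟩, hsD⟩
    have := csInf_le hTb this
    rw [← hS] at this
    linarith
  have hqup : ∀ τ, 0 < τ → τ ≤ S → q + τ • ν₀ ∉ D := by
    intro τ hτ0 hτS
    have : q + τ • ν₀ = c - (S - τ) • ν₀ := by
      rw [hq, sub_smul]; module
    rw [this]
    exact hbelow (S - τ) (by linarith) (by linarith)
  have hqfr : q ∈ frontier D := by
    rw [frontier, hDc.closure_eq]
    refine ⟨hqD, fun hqint => ?_⟩
    obtain ⟨ρ, hρpos, hball⟩ := Metric.isOpen_iff.1 isOpen_interior q hqint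
    set τ := min S (ρ / 2) with hτ
    have hτ0 : 0 < τ := lt_min hS0 (by linarith)
    have hτS : τ ≤ S := min_le_left _ _
    have : q + τ • ν₀ ∈ ball q ρ := by
      rw [mem_ball, dist_eq_norm]
      have : q + τ • ν₀ - q = τ • ν₀ := by abel
      rw [this, norm_smul, hν₁, mul_one, Real.norm_eq_abs, abs_of_pos hτ0]
      calc τ ≤ ρ / 2 := min_le_right _ _
      _ < ρ := by linarith
    exact hqup τ hτ0 hτS (interior_subset (hball this))
  have hqnorm : ‖q - p‖ ≤ 2 * ‖c - p‖ := by
    have : q - p = (c - p) - S • ν₀ := by rw [hq]; module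
    rw [this]
    calc ‖(c - p) - S • ν₀‖ ≤ ‖c - p‖ + ‖S • ν₀‖ := norm_sub_le _ _
    _ = ‖c - p‖ + S := by
        rw [norm_smul, hν₁, mul_one, Real.norm_eq_abs, abs_of_pos hS0]
    _ ≤ 2 * ‖c - p‖ := by rw [hη] at hSη; linarith
  -- ν is close to ν₀ at q
  have hρν : ‖ν₀ - ν q‖ < 1/8 := by
    have h1 : dist q p < r₂ := by
      rw [dist_eq_norm]
      calc ‖q - p‖ ≤ 2 * ‖c - p‖ := hqnorm
      _ < r₂ := by linarith
    have h2 := hcont₂ hqfr h1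
    rw [dist_comm, dist_eq_norm] at h2
    exact h2
  -- contradiction at q
  obtain ⟨hq₁, hqorth, εq, hεq, hqint⟩ := hν q hqfr
  set C : ℝ := min (εq / 2) S with hC
  have hCpos : 0 < C := lt_min (by linarith) hS0
  set tks : ℕ → ℝ := fun k => C / (k + 1) with htks
  have htkpos : ∀ k, 0 < tks k := fun k => by positivity
  have htkC : ∀ k, tks k ≤ C := by
    intro k
    show C / ((k:ℝ) + 1) ≤ C
    rw [div_le_iff₀ (by positivity)]
    nlinarith [hCpos.le, Nat.cast_nonneg (α := ℝ) k]
  have htkεq : ∀ k, tks k < εq := by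
    intro k
    have h1 := htkC k
    have h2 : C ≤ εq / 2 := min_le_left _ _
    linarith
  have htkS : ∀ k, tks k ≤ S := by
    intro k
    have h1 := htkC k
    have h2 : C ≤ S := min_le_right _ _
    linarith
  have htk0 : Tendsto tks atTop (nhds 0) := by
    rw [htks]
    have h1 : Tendsto (fun k : ℕ => 1 / ((k : ℝ) + 1)) atTop (nhds 0) :=
      tendsto_one_div_add_atTop_nhds_zero_nat
    have h2 := h1.const_mul C
    rw [mul_zero] at h2
    apply h2.congr
    intro k
    field_simp
  have haD : ∀ k, q + tks k • ν q ∈ D := by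
    intro k
    exact interior_subset (hqint (tks k) ⟨htkpos k, htkεq k⟩)
  have hbD : ∀ k, q + tks k • ν₀ ∉ D := fun k => hqup (tks k) (htkpos k) (htkS k)
  have hcrossk : ∀ k, ∃ s : ℝ, s ∈ Set.Icc (0:ℝ) 1 ∧
      (q + tks k • ν q) + s • ((q + tks k • ν₀) - (q + tks k • ν q)) ∈ frontier D :=
    fun k => cross_lemma hDc (haD k) (hbD k)
  choose sk hsk hrk using hcrossk
  set m : ℕ → Euc n := fun k => ν q + sk k • (ν₀ - ν q) with hm
  set rr : ℕ → Euc n := fun k => q + tks k • m k with hrr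
  have hrreq : ∀ k, (q + tks k • ν q) + sk k • ((q + tks k • ν₀) - (q + tks k • ν q)) = rr k := by
    intro k
    rw [hrr, hm]
    simp only [smul_add, smul_sub, smul_smul]
    module
  have hrfr : ∀ k, rr k ∈ frontier D := by
    intro k
    have := hrk k
    rw [hrreq k] at this
    exact this
  have hρ' : ∀ k, ‖sk k • (ν₀ - ν q)‖ ≤ 1/8 := by
    intro k
    rw [norm_smul, Real.norm_eq_abs, abs_of_nonneg (hsk k).1]
    calc sk k * ‖ν₀ - ν q‖ ≤ 1 * ‖ν₀ - ν q‖ :=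
      mul_le_mul_of_nonneg_right (hsk k).2 (norm_nonneg _)
    _ = ‖ν₀ - ν q‖ := one_mul _
    _ ≤ 1/8 := hρν.le
  have hmub : ∀ k, ‖m k‖ ≤ 9/8 := by
    intro k
    rw [hm]
    calc ‖ν q + sk k • (ν₀ - ν q)‖ ≤ ‖ν q‖ + ‖sk k • (ν₀ - ν q)‖ := norm_add_le _ _
    _ ≤ 1 + 1/8 := add_le_add (le_of_eq hq₁) (hρ' k)
    _ = 9/8 := by norm_num
  have hminner : ∀ k, 7/8 ≤ ⟪ν q, m k⟫ := by
    intro k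
    rw [hm, inner_add_right, real_inner_self_eq_norm_sq, hq₁]
    have h1 : |⟪ν q, sk k • (ν₀ - ν q)⟫| ≤ 1/8 := by
      calc |⟪ν q, sk k • (ν₀ - ν q)⟫| ≤ ‖ν q‖ * ‖sk k • (ν₀ - ν q)‖ :=
        abs_real_inner_le_norm _ _
      _ ≤ 1 * (1/8) := by
          apply mul_le_mul (le_of_eq hq₁) (hρ' k) (norm_nonneg _) zero_le_one
      _ = 1/8 := by norm_num
    have := abs_le.1 h1
    nlinarith [this.1]
  have hmlb : ∀ k, 7/8 ≤ ‖m k‖ := by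
    intro k
    have h1 := hminner k
    have h2 : ⟪ν q, m k⟫ ≤ ‖ν q‖ * ‖m k‖ := real_inner_le_norm _ _
    rw [hq₁, one_mul] at h2
    linarith
  have hrne : ∀ k, rr k ≠ q := by
    intro k h
    have hz : tks k • m k = 0 := by
      have h3 : rr k - q = tks k • m k := by rw [hrr]; module
      rw [h, sub_self] at h3
      exact h3.symm
    rcases smul_eq_zero.1 hz with h' | h'
    · exact absurd h' (ne_of_gt (htkpos k))
    · have := hmlb k
      rw [h'] at this
      simp at this
      linarith
  have hrq : Tendsto rr atTop (nhds q) := by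
    rw [tendsto_iff_dist_tendsto_zero]
    have hd : ∀ k, dist (rr k) q ≤ (9/8) * tks k := by
      intro k
      rw [dist_eq_norm]
      have : rr k - q = tks k • m k := by rw [hrr]; module
      rw [this, norm_smul, Real.norm_eq_abs, abs_of_pos (htkpos k)]
      have h9 := hmub k
      have h10 := (htkpos k).le
      nlinarith
    have h2 := htk0.const_mul (9/8 : ℝ)
    rw [mul_zero] at h2
    exact squeeze_zero (fun k => dist_nonneg) hd h2
  set dirs : ℕ → Euc n := fun k => (‖rr k - q‖)⁻¹ • (rr k - q) with hdirs
  have hdirs_mem : ∀ k, dirs k ∈ sphere (0 : Euc n) 1 := by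
    intro k
    rw [mem_sphere_zero_iff_norm, hdirs]
    simp only [norm_smul, norm_inv, norm_norm]
    rw [inv_mul_cancel₀ (norm_ne_zero_iff.2 (sub_ne_zero.2 (hrne k)))]
  obtain ⟨u₀, hu₀mem, φ, hφ, hφt⟩ := (isCompact_sphere (0 : Euc n) 1).tendsto_subseq hdirs_mem
  have hu₀TC : u₀ ∈ tangentConeAt ℝ (frontier D) q := by
    apply mem_tangentCone_of_seq (q := fun k => rr (φ k))
      (fun k => hrfr _) (fun k => hrne _) (hrq.comp hφ.tendsto_atTop)
    exact hφt
  have horthu := hqorth u₀ hu₀TC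
  have hlb : ∀ k, 7/9 ≤ ⟪ν q, dirs (φ k)⟫ := by
    intro k
    rw [hdirs]
    simp only [real_inner_smul_right]
    have heq1 : rr (φ k) - q = tks (φ k) • m (φ k) := by rw [hrr]; module
    rw [heq1, norm_smul, Real.norm_eq_abs, abs_of_pos (htkpos (φ k)),
      real_inner_smul_right]
    have h1 := hminner (φ k)
    have h2 := hmub (φ k)
    have h3 := hmlb (φ k)
    have h4 := htkpos (φ k)
    have h6 : 0 < ‖m (φ k)‖ := by linarith
    have h7 : (tks (φ k) * ‖m (φ k)‖)⁻¹ * (tks (φ k) * ⟪ν q, m (φ k)⟫)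
        = ⟪ν q, m (φ k)⟫ / ‖m (φ k)‖ := by
      field_simp
    rw [h7, le_div_iff₀ h6]
    nlinarith
  have hlim : Tendsto (fun k => ⟪ν q, dirs (φ k)⟫) atTop (nhds ⟪ν q, u₀⟫) := by
    have h1 : Continuous fun x : Euc n => ⟪ν q, x⟫ :=
      continuous_const.inner continuous_id
    exact (h1.tendsto u₀).comp hφt
  have : 7/9 ≤ ⟪ν q, u₀⟫ :=
    le_of_tendsto_of_tendsto tendsto_const_nhds hlim (Eventually.of_forall hlb)
  rw [horthu] at this
  linarith

end E3


set_option maxHeartbeats 1000000 in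
open Aniso Filter in
/-- The anisotropic distance from `M = ∂D` to an interior point `y` is realized:
there is `p ∈ M` with `y - p = d_F(M, y)·φ(ν(p))`. -/
theorem stmt_10 {n : ℕ} (F : Euc n → ℝ) (hF : IsAnisoNorm F)
    (D : Set (Euc n)) (hD : IsCompact D) (hint : (interior D).Nonempty)
    (ν : Euc n → Euc n)
    (hν : ∀ p ∈ frontier D, IsInnerUnitNormalAt D (frontier D) p (ν p))
    (hsm : ContDiffOn ℝ (⊤ : ℕ∞) ν (frontier D))
    (y : Euc n) (hy : y ∈ D \ frontier D) :
    ∃ p ∈ frontier D,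
      y - p = anisoDistSet F (frontier D) y • wulffMap F (ν p) := by
  classical
  have hDc : IsClosed D := hD.isClosed
  have hyD : y ∈ D := hy.1
  have hyM : y ∉ frontier D := hy.2
  have hMc : IsCompact (frontier D) :=
    IsCompact.of_isClosed_subset hD isClosed_frontier (frontier_subset_self hDc)
  -- the frontier is nonempty
  obtain ⟨R, hR⟩ : ∃ R, D ⊆ closedBall 0 R := (hD.isBounded).subset_closedBall 0
  have hbD : (EuclideanSpace.single (0 : Fin (n+1)) (|R| + 1) : Euc n) ∉ D := by
    intro h
    have h2 := hR h
    rw [mem_closedBall, dist_zero_right, EuclideanSpace.norm_single, Real.norm_eq_abs] at h2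
    have h3 : (0:ℝ) ≤ |R| := abs_nonneg R
    have h4 : R ≤ |R| := le_abs_self R
    rw [abs_of_nonneg (by linarith : (0:ℝ) ≤ |R| + 1)] at h2
    linarith
  obtain ⟨s₀, hs₀, hfr₀⟩ := cross_lemma hDc hyD hbD
  have hMne : (frontier D).Nonempty := ⟨_, hfr₀⟩
  -- minimizer on the frontier
  have hgc : Continuous fun q : Euc n => dualF F (y - q) :=
    (dualF_continuous hF).comp (continuous_const.sub continuous_id)
  obtain ⟨p, hpM, hpmin⟩ := hMc.exists_isMinOn hMne hgc.continuousOn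
  set w : Euc n := y - p with hw
  set d : ℝ := dualF F w with hd
  have hd_eq : anisoDistSet F (frontier D) y = d := by
    apply IsLeast.csInf_eq
    constructor
    · exact ⟨p, hpM, rfl⟩
    · rintro r ⟨q, hqM, rfl⟩
      have h := isMinOn_iff.1 hpmin q hqM
      rw [← hw, ← hd] at h
      exact h
  have hyp : y ≠ p := fun h => hyM (h ▸ hpM)
  have hw0 : w ≠ 0 := sub_ne_zero.2 hyp
  have hdpos : 0 < d := dualF_pos hF hw0
  obtain ⟨hν₁, horth, ε, hε, hνint⟩ := hν p hpM
  have hνs : ν p ∈ unitSphere n := mem_sphere_iff.2 hν₁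
  have hFν : 0 < F (ν p) := hF.pos _ hνs
  rcases le_or_gt (d * F (ν p)) ⟪w, ν p⟫ with hge | hlt
  · -- ν p is a maximizer of z ↦ ⟪w,z⟫/F z on the sphere
    have hub : ∀ z ∈ unitSphere n, ⟪w, z⟫ / F z ≤ ⟪w, ν p⟫ / F (ν p) := by
      intro z hz
      have h1 : ⟪w, z⟫ / F z ≤ d := le_dualF hF hz
      have h2 : d ≤ ⟪w, ν p⟫ / F (ν p) := by
        rw [le_div_iff₀ hFν]; linarith
      linarith
    have hlag := lagrange hF hνs hub
    have hdv : ⟪w, ν p⟫ / F (ν p) = d := by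
      have h1 : ⟪w, ν p⟫ / F (ν p) ≤ d := le_dualF hF hνs
      have h2 : d ≤ ⟪w, ν p⟫ / F (ν p) := by
        rw [le_div_iff₀ hFν]; linarith
      linarith
    refine ⟨p, hpM, ?_⟩
    rw [hd_eq]
    show y - p = d • wulffMap F (ν p)
    rw [wulffMap, ← hdv]
    exact hlag
  · exfalso
    set U : Set (Euc n) := {x | dualF F (y - x) < d} with hU
    have hUopen : IsOpen U := isOpen_lt hgc continuous_const
    have hUy : y ∈ U := by
      show dualF F (y - y) < d
      rw [sub_self, dualF_zero hF]
      exact hdpos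
    have hUM : ∀ x ∈ U, x ∉ frontier D := by
      intro x hx hxM
      have h := isMinOn_iff.1 hpmin x hxM
      rw [← hw, ← hd] at h
      have hx' : dualF F (y - x) < d := hx
      linarith
    have hUconv : Convex ℝ U := by
      intro x₁ hx₁ x₂ hx₂ a b ha hb hab
      show dualF F (y - (a • x₁ + b • x₂)) < d
      have hsplit : y - (a • x₁ + b • x₂) = a • (y - x₁) + b • (y - x₂) := by
        have h1 : a • (y - x₁) + b • (y - x₂) = (a + b) • y - (a • x₁ + b • x₂) := by
          module
        rw [h1, hab, one_smul]
      rw [hsplit]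
      have h2 : dualF F (a • (y - x₁) + b • (y - x₂)) ≤
          a * dualF F (y - x₁) + b * dualF F (y - x₂) := by
        calc dualF F (a • (y - x₁) + b • (y - x₂))
            ≤ dualF F (a • (y - x₁)) + dualF F (b • (y - x₂)) := dualF_add_le hF _ _
        _ = a * dualF F (y - x₁) + b * dualF F (y - x₂) := by
            rw [dualF_smul hF ha, dualF_smul hF hb]
      have hx₁' : dualF F (y - x₁) < d := hx₁
      have hx₂' : dualF F (y - x₂) < d := hx₂
      rcases eq_or_lt_of_le ha with h | h
      · have hb1 : b = 1 := by linarith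
        rw [← h, hb1] at h2
        rw [← h, hb1]
        simp only [zero_mul, one_mul, zero_add] at h2 ⊢
        linarith
      · have h5 : a * dualF F (y - x₁) < a * d := by
          exact mul_lt_mul_of_pos_left hx₁' h
        have h6 : b * dualF F (y - x₂) ≤ b * d := by
          exact mul_le_mul_of_nonneg_left hx₂'.le hb
        nlinarith
    have hyint : y ∈ interior D := by
      by_contra hyi
      apply hyM
      rw [frontier, hDc.closure_eq]
      exact ⟨hyD, hyi⟩
    have hUD : U ⊆ interior D := by
      have hDcopen : IsOpen Dᶜ := hDc.isOpen_compl
      have hsub : U ⊆ interior D ∪ Dᶜ := by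
        intro x hx
        by_cases hxD : x ∈ D
        · left
          by_contra hxi
          exact (hUM x hx) (by rw [frontier, hDc.closure_eq]; exact ⟨hxD, hxi⟩)
        · right; exact hxD
      have hdisj : Disjoint (interior D) Dᶜ :=
        Set.disjoint_left.2 fun x hx hx2 => hx2 (interior_subset hx)
      exact hUconv.isPreconnected.subset_left_of_subset_union
        isOpen_interior hDcopen hdisj hsub ⟨y, hUy, hyint⟩
    -- construct the direction δ
    set g : Euc n := gradient F (ν p) with hg
    have hgl : dualF F (d • g) ≤ d := by
      rw [hg, dualF_smul hF hdpos.le]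
      have := dualF_grad_le hF hνs
      nlinarith
    set xh : Euc n := y - d • g with hxh
    have hA : ⟪xh - p, ν p⟫ < 0 := by
      have h1 : xh - p = w - d • g := by rw [hxh, hw]; module
      rw [h1, inner_sub_left, real_inner_smul_left, hg,
        euler hF (sphere_ne_zero hνs)]
      linarith
    set A : ℝ := ⟪xh - p, ν p⟫ with hAdef
    set B : ℝ := ⟪w, ν p⟫ with hBdef
    set σ : ℝ := min (1/2) ((-A) / (2 * (|B| + 1))) with hσ
    have hσ0 : 0 < σ := by
      apply lt_min (by norm_num)
      apply div_pos (by linarith) (by positivity)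
    have hσ1 : σ < 1 := lt_of_le_of_lt (min_le_left _ _) (by norm_num)
    have hσA : (1 - σ) * A + σ * B < 0 := by
      have h1 : (1 - σ) * A ≤ (1/2) * A := by
        have : σ ≤ 1/2 := min_le_left _ _
        nlinarith
      have h2 : σ * B ≤ σ * |B| := by
        have := le_abs_self B
        nlinarith
      have h3 : σ * |B| < (-A) / 2 := by
        have h4 : σ ≤ (-A) / (2 * (|B| + 1)) := min_le_right _ _
        have h5 : 0 ≤ |B| := abs_nonneg B
        have h6 : σ * |B| ≤ ((-A) / (2 * (|B| + 1))) * |B| := by nlinarith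
        have h7 : ((-A) / (2 * (|B| + 1))) * |B| < (-A) / 2 := by
          rw [div_mul_eq_mul_div, div_lt_div_iff₀ (by positivity) (by norm_num)]
          nlinarith
        linarith
      nlinarith
    set x' : Euc n := xh + σ • (y - xh) with hx'
    have hyx' : y - x' = (1 - σ) • (y - xh) := by rw [hx']; module
    have hx'U : x' ∈ U := by
      show dualF F (y - x') < d
      rw [hyx', dualF_smul hF (by linarith)]
      have h1 : dualF F (y - xh) ≤ d := by
        rw [hxh]
        have : y - (y - d • g) = d • g := by module
        rw [this]
        exact hgl
      nlinarith
    set δ : Euc n := x' - p with hδ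
    have hδν : ⟪δ, ν p⟫ < 0 := by
      have h1 : δ = (1 - σ) • (xh - p) + σ • (y - p) := by
        rw [hδ, hx']; module
      rw [h1, inner_add_left, real_inner_smul_left, real_inner_smul_left]
      rw [← hw] at *
      calc (1 - σ) * ⟪xh - p, ν p⟫ + σ * ⟪w, ν p⟫ = (1 - σ) * A + σ * B := rfl
      _ < 0 := hσA
    have hδint : ∀ t ∈ Set.Ioc (0:ℝ) 1, p + t • δ ∈ interior D := by
      intro t ht
      apply hUD
      show dualF F (y - (p + t • δ)) < d
      have h1 : y - (p + t • δ) = (1 - t) • w + t • (y - x') := by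
        rw [hδ, hw]; module
      rw [h1]
      have h2 : dualF F ((1 - t) • w + t • (y - x')) ≤
          (1 - t) * d + t * dualF F (y - x') := by
        calc dualF F ((1 - t) • w + t • (y - x'))
            ≤ dualF F ((1 - t) • w) + dualF F (t • (y - x')) := dualF_add_le hF _ _
        _ = (1 - t) * d + t * dualF F (y - x') := by
            rw [dualF_smul hF (by linarith [ht.2]), dualF_smul hF ht.1.le, hd]
      have h3 : dualF F (y - x') < d := hx'U
      have ht1 := ht.1
      nlinarith
    exact main_contra hD hν hsm hpM hδν hδint
end
end

section
/- With the F-cut function c : M → ℝ⁺ defined by c(p) = sup{t > 0 : d_F(M, p + t·φ(ν(p))) = t}, the rays Γ_p = {p + t·φ(ν(p)) : 0 ≤ t < c(p)} for distinct points p ≠ q of M are disjoint: Γ_p ∩ Γ_q = ∅. -/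
open scoped RealInnerProductSpace
open Metric Set MeasureTheory

noncomputable section

namespace AnisoAux

variable {n : ℕ} {F : Euc n → ℝ}

lemma sphere_ne_zero {x : Euc n} (hx : x ∈ unitSphere n) : x ≠ 0 := by
  intro h
  simp only [unitSphere, mem_sphere, h, dist_self] at hx
  norm_num at hx

lemma mem_sphere_iff {x : Euc n} : x ∈ unitSphere n ↔ ‖x‖ = 1 := by
  simp [unitSphere, mem_sphere, dist_eq_norm]

lemma contDiffAtF (hF : IsAnisoNorm F) {x : Euc n} (hx : x ≠ 0) : ContDiffAt ℝ (⊤ : ℕ∞) F x :=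
  hF.smooth.contDiffAt (isOpen_compl_singleton.mem_nhds (by simpa using hx))

lemma diffAtF (hF : IsAnisoNorm F) {x : Euc n} (hx : x ≠ 0) : DifferentiableAt ℝ F x :=
  (contDiffAtF hF hx).differentiableAt (by simp)

lemma grad_inner (F : Euc n → ℝ) (y v : Euc n) : ⟪gradient F y, v⟫ = fderiv ℝ F y v := by
  simp [gradient, InnerProductSpace.toDual_symm_apply]

lemma euler (hF : IsAnisoNorm F) {x : Euc n} (hx : x ≠ 0) : fderiv ℝ F x x = F x := by
  have hc : (fun t : ℝ => F (t • x)) =ᶠ[nhds (1:ℝ)] fun t => t * F x := by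
    filter_upwards [isOpen_Ioi.mem_nhds (show (0:ℝ) < 1 by norm_num)] with t ht
    exact hF.homog t ht x
  have hline : HasDerivAt (fun t : ℝ => t • x) x 1 := by
    simpa using (hasDerivAt_id (1:ℝ)).smul_const x
  have h1 : HasDerivAt (fun t : ℝ => F (t • x)) (fderiv ℝ F x x) 1 := by
    have hd := (diffAtF hF hx).hasFDerivAt
    have hd' : HasFDerivAt F (fderiv ℝ F x) ((1:ℝ) • x) := by rwa [one_smul]
    exact hd'.comp_hasDerivAt (1:ℝ) hline
  have h2 : HasDerivAt (fun t : ℝ => F (t • x)) (F x) 1 := by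
    have : HasDerivAt (fun t : ℝ => t * F x) (F x) 1 := by
      simpa using (hasDerivAt_id (1:ℝ)).mul_const (F x)
    exact this.congr_of_eventuallyEq hc
  have := h1.unique h2
  simpa using this

lemma euler_grad (hF : IsAnisoNorm F) {x : Euc n} (hx : x ≠ 0) : ⟪gradient F x, x⟫ = F x := by
  rw [grad_inner]; exact euler hF hx

lemma fderiv_homog (hF : IsAnisoNorm F) {c : ℝ} (hc : 0 < c) {x : Euc n} (hx : x ≠ 0) :
    fderiv ℝ F (c • x) = fderiv ℝ F x := by
  have hcx : c • x ≠ 0 := smul_ne_zero hc.ne' hx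
  have hline : HasFDerivAt (fun y : Euc n => c • y)
      (c • ContinuousLinearMap.id ℝ (Euc n)) x := (hasFDerivAt_id x).const_smul c
  have h1 : HasFDerivAt (fun y : Euc n => F (c • y))
      ((fderiv ℝ F (c • x)).comp (c • ContinuousLinearMap.id ℝ (Euc n))) x :=
    (diffAtF hF hcx).hasFDerivAt.comp x hline
  have hc2 : (fun y : Euc n => F (c • y)) =ᶠ[nhds x] fun y => c * F y := by
    filter_upwards [isOpen_compl_singleton.mem_nhds (by simpa using hx)] with y hy
    exact hF.homog c hc y
  have h2 : HasFDerivAt (fun y : Euc n => c * F y) (c • fderiv ℝ F x) x :=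
    (diffAtF hF hx).hasFDerivAt.const_mul c
  have h3 : HasFDerivAt (fun y : Euc n => c * F y)
      ((fderiv ℝ F (c • x)).comp (c • ContinuousLinearMap.id ℝ (Euc n))) x :=
    h1.congr_of_eventuallyEq hc2.symm
  have heq := h3.unique h2
  ext v
  have := congrArg (fun L : Euc n →L[ℝ] ℝ => L v) heq
  simp only [ContinuousLinearMap.comp_apply, ContinuousLinearMap.smul_apply,
    ContinuousLinearMap.id_apply] at this
  have : c * fderiv ℝ F (c • x) v = c * fderiv ℝ F x v := by
    simpa [_root_.map_smul, smul_eq_mul] using this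
  exact mul_left_cancel₀ hc.ne' this

lemma grad_homog (hF : IsAnisoNorm F) {c : ℝ} (hc : 0 < c) {x : Euc n} (hx : x ≠ 0) :
    gradient F (c • x) = gradient F x := by
  simp only [gradient, fderiv_homog hF hc hx]


lemma grad_eq_comp (F : Euc n → ℝ) :
    gradient F = (InnerProductSpace.toDual ℝ (Euc n)).symm ∘ (fun y => fderiv ℝ F y) := rfl

lemma contDiffAt_grad (hF : IsAnisoNorm F) {x : Euc n} (hx : x ≠ 0) :
    ContDiffAt ℝ 2 (gradient F) x := by
  have h1 : ContDiffAt ℝ 2 (fun y => fderiv ℝ F y) x :=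
    (contDiffAtF hF hx).fderiv_right (WithTop.coe_le_coe.2 le_top)
  rw [grad_eq_comp]
  exact ContDiffAt.comp x ((InnerProductSpace.toDual ℝ (Euc n)).symm.contDiff.contDiffAt) h1

lemma diffAt_grad (hF : IsAnisoNorm F) {x : Euc n} (hx : x ≠ 0) :
    DifferentiableAt ℝ (gradient F) x :=
  (contDiffAt_grad hF hx).differentiableAt (by simp)

lemma hess_inner (F : Euc n → ℝ) (x u v : Euc n) :
    ⟪fderiv ℝ (gradient F) x u, v⟫ = fderiv ℝ (fderiv ℝ F) x u v := by
  rw [grad_eq_comp, LinearIsometryEquiv.comp_fderiv]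
  simp only [ContinuousLinearMap.comp_apply, LinearIsometryEquiv.coe_coe]
  exact InnerProductSpace.toDual_symm_apply

lemma hess_symm (hF : IsAnisoNorm F) {x : Euc n} (hx : x ≠ 0) (u v : Euc n) :
    ⟪fderiv ℝ (gradient F) x u, v⟫ = ⟪fderiv ℝ (gradient F) x v, u⟫ := by
  rw [hess_inner, hess_inner]
  exact ((contDiffAtF hF hx).isSymmSndFDerivAt (by simp only [minSmoothness_of_isRCLikeNormedField]; exact WithTop.coe_le_coe.2 (le_top : (2:ℕ∞) ≤ ⊤))).eq u v

lemma hess_radial (hF : IsAnisoNorm F) {x : Euc n} (hx : x ≠ 0) :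
    fderiv ℝ (gradient F) x x = 0 := by
  have hline : HasDerivAt (fun t : ℝ => t • x) x 1 := by
    simpa using (hasDerivAt_id (1:ℝ)).smul_const x
  have h1 : HasDerivAt (fun t : ℝ => gradient F (t • x)) (fderiv ℝ (gradient F) x x) 1 := by
    have hd : HasFDerivAt (gradient F) (fderiv ℝ (gradient F) x) ((1:ℝ) • x) := by
      rw [one_smul]; exact (diffAt_grad hF hx).hasFDerivAt
    exact hd.comp_hasDerivAt (1:ℝ) hline
  have hc : (fun t : ℝ => gradient F (t • x)) =ᶠ[nhds (1:ℝ)] fun _ => gradient F x := by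
    filter_upwards [isOpen_Ioi.mem_nhds (show (0:ℝ) < 1 by norm_num)] with t ht
    exact grad_homog hF ht hx
  have h2 : HasDerivAt (fun t : ℝ => gradient F (t • x)) 0 1 :=
    (hasDerivAt_const (1:ℝ) (gradient F x)).congr_of_eventuallyEq hc
  exact h1.unique h2

lemma hess_scale (hF : IsAnisoNorm F) {c : ℝ} (hc : 0 < c) {x : Euc n} (hx : x ≠ 0) (v : Euc n) :
    fderiv ℝ (gradient F) (c • x) v = c⁻¹ • fderiv ℝ (gradient F) x v := by
  have hcx : c • x ≠ 0 := smul_ne_zero hc.ne' hx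
  have hline : HasFDerivAt (fun y : Euc n => c • y)
      (c • ContinuousLinearMap.id ℝ (Euc n)) x := (hasFDerivAt_id x).const_smul c
  have h1 : HasFDerivAt (fun y : Euc n => gradient F (c • y))
      ((fderiv ℝ (gradient F) (c • x)).comp (c • ContinuousLinearMap.id ℝ (Euc n))) x :=
    (diffAt_grad hF hcx).hasFDerivAt.comp x hline
  have hc2 : (fun y : Euc n => gradient F (c • y)) =ᶠ[nhds x] gradient F := by
    filter_upwards [isOpen_compl_singleton.mem_nhds (by simpa using hx)] with y hy
    exact grad_homog hF hc (by simpa using hy)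
  have h3 : HasFDerivAt (gradient F)
      ((fderiv ℝ (gradient F) (c • x)).comp (c • ContinuousLinearMap.id ℝ (Euc n))) x :=
    h1.congr_of_eventuallyEq hc2.symm
  have heq := h3.unique (diffAt_grad hF hx).hasFDerivAt
  have := congrArg (fun L : Euc n →L[ℝ] Euc n => L v) heq
  simp only [ContinuousLinearMap.comp_apply, ContinuousLinearMap.smul_apply,
    ContinuousLinearMap.id_apply] at this
  have h4 : c • fderiv ℝ (gradient F) (c • x) v = fderiv ℝ (gradient F) x v := by
    simpa [_root_.map_smul] using this
  rw [← h4, smul_smul, inv_mul_cancel₀ hc.ne', one_smul]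

lemma hess_sphere (hF : IsAnisoNorm F) {x : Euc n} (hx : x ∈ unitSphere n) (v : Euc n) :
    ⟪fderiv ℝ (gradient F) x v, v⟫ =
      ⟪fderiv ℝ (gradient F) x (v - ⟪v, x⟫ • x), v - ⟪v, x⟫ • x⟫ := by
  have hx0 : x ≠ 0 := sphere_ne_zero hx
  set w := v - ⟪v, x⟫ • x with hw
  have hvw : v = w + ⟪v, x⟫ • x := by rw [hw]; abel
  have hAx : fderiv ℝ (gradient F) x x = 0 := hess_radial hF hx0
  have hAv : fderiv ℝ (gradient F) x v = fderiv ℝ (gradient F) x w := by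
    conv_lhs => rw [hvw]
    rw [map_add, _root_.map_smul, hAx, smul_zero, add_zero]
  rw [hAv]
  conv_lhs => rw [hvw]
  rw [inner_add_right, real_inner_smul_right]
  have : ⟪fderiv ℝ (gradient F) x w, x⟫ = 0 := by
    rw [hess_symm hF hx0, hAx, inner_zero_left]
  rw [this, mul_zero, add_zero]

lemma tangential_nonzero_pos (hF : IsAnisoNorm F) {x : Euc n} (hx : x ∈ unitSphere n)
    {v : Euc n} (hv : v - ⟪v, x⟫ • x ≠ 0) :
    0 < ⟪fderiv ℝ (gradient F) x v, v⟫ := by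
  rw [hess_sphere hF hx]
  refine hF.convex x hx _ ?_ hv
  have hxx : ⟪x, x⟫ = (1:ℝ) := by
    rw [real_inner_self_eq_norm_sq, mem_sphere_iff.1 hx]; norm_num
  rw [inner_sub_left, real_inner_smul_left, hxx, mul_one, sub_self]

lemma hess_nonneg (hF : IsAnisoNorm F) {y : Euc n} (hy : y ≠ 0) (v : Euc n) :
    0 ≤ ⟪fderiv ℝ (gradient F) y v, v⟫ := by
  have hny : (0:ℝ) < ‖y‖ := norm_pos_iff.2 hy
  set x := ‖y‖⁻¹ • y with hxdef
  have hx : x ∈ unitSphere n := by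
    rw [mem_sphere_iff, hxdef, norm_smul, norm_inv, norm_norm, inv_mul_cancel₀ hny.ne']
  have hx0 : x ≠ 0 := sphere_ne_zero hx
  have hyx : y = ‖y‖ • x := by rw [hxdef, smul_smul, mul_inv_cancel₀ hny.ne', one_smul]
  have h1 : fderiv ℝ (gradient F) y v = ‖y‖⁻¹ • fderiv ℝ (gradient F) x v := by
    conv_lhs => rw [hyx]
    exact hess_scale hF hny hx0 v
  rw [h1, real_inner_smul_left]
  have h2 : 0 ≤ ⟪fderiv ℝ (gradient F) x v, v⟫ := by
    rw [hess_sphere hF hx]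
    rcases eq_or_ne (v - ⟪v, x⟫ • x) 0 with h | h
    · rw [h]; simp
    · have hxx : ⟪v - ⟪v, x⟫ • x, x⟫ = 0 := by
        have hxx1 : ⟪x, x⟫ = (1:ℝ) := by
          rw [real_inner_self_eq_norm_sq, mem_sphere_iff.1 hx]; norm_num
        rw [inner_sub_left, real_inner_smul_left, hxx1, mul_one, sub_self]
      exact (hF.convex x hx _ hxx h).le
  positivity
lemma seg_ne_zero {x z : Euc n} (hx : ‖x‖ = 1) (hz : ‖z‖ = 1) (hne : z ≠ -x)
    {u : ℝ} (hu : u ∈ Icc (0:ℝ) 1) : x + u • (z - x) ≠ 0 := by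
  intro h
  have h' : x + (u • z - u • x) = 0 := by rw [← smul_sub]; exact h
  have hsum : (1 - u) • x + u • z = 0 := by
    rw [sub_smul, one_smul, show x - u • x + u • z = x + (u • z - u • x) from by abel]
    exact h'
  have hneg : (1 - u) • x = -(u • z) := eq_neg_of_add_eq_zero_left hsum
  have hn : ‖(1 - u) • x‖ = ‖u • z‖ := by rw [hneg, norm_neg]
  rw [norm_smul, norm_smul, hx, hz, mul_one, mul_one, Real.norm_eq_abs, Real.norm_eq_abs,
    abs_of_nonneg (by linarith [hu.2]), abs_of_nonneg hu.1] at hn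
  have hu2 : u = 1/2 := by linarith
  rw [hu2, show (1:ℝ) - 1/2 = 1/2 from by norm_num] at hneg
  have hx2 : (1/2 : ℝ) • x = (1/2 : ℝ) • (-z) := by rw [hneg, smul_neg]
  have hxz : x = -z := smul_right_injective (Euc n) (by norm_num : (1/2:ℝ) ≠ 0) hx2
  exact hne (by rw [hxz, neg_neg])

lemma keylt (hF : IsAnisoNorm F) {x z : Euc n} (hx : x ∈ unitSphere n)
    (hz : z ∈ unitSphere n) (hne : z ≠ x) : ⟪gradient F x, z⟫ < F z := by
  have hx1 : ‖x‖ = 1 := mem_sphere_iff.1 hx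
  have hz1 : ‖z‖ = 1 := mem_sphere_iff.1 hz
  have hx0 : x ≠ 0 := sphere_ne_zero hx
  by_cases hzx : z = -x
  · subst hzx
    have h1 : ⟪gradient F x, -x⟫ = -F x := by
      rw [inner_neg_right, euler_grad hF hx0]
    rw [h1]
    have h2 : 0 < F x := hF.pos x hx
    have h3 : 0 < F (-x) := hF.pos (-x) hz
    linarith
  · set v : Euc n := z - x with hv
    set ℓ : ℝ → Euc n := fun u => x + u • v with hl
    have hnz : ∀ u ∈ Icc (0:ℝ) 1, ℓ u ≠ 0 := fun u hu => seg_ne_zero hx1 hz1 hzx hu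
    set g : ℝ → ℝ := fun u => F (ℓ u) with hg
    set g' : ℝ → ℝ := fun u => ⟪v, gradient F (ℓ u)⟫ with hg'
    set g'' : ℝ → ℝ := fun u => ⟪v, fderiv ℝ (gradient F) (ℓ u) v⟫ with hg''
    have hline : ∀ u : ℝ, HasDerivAt ℓ v u := fun u => by
      have := ((hasDerivAt_id u).smul_const v).const_add x
      simp only [id_eq, one_smul] at this
      exact this
    have hgder : ∀ u ∈ Icc (0:ℝ) 1, HasDerivAt g (g' u) u := by
      intro u hu
      have hd : HasFDerivAt F (fderiv ℝ F (ℓ u)) (ℓ u) := (diffAtF hF (hnz u hu)).hasFDerivAt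
      have hcomp := hd.comp_hasDerivAt u (hline u)
      have heq : fderiv ℝ F (ℓ u) v = g' u := by
        show fderiv ℝ F (ℓ u) v = ⟪v, gradient F (ℓ u)⟫
        rw [real_inner_comm, grad_inner]
      rwa [heq] at hcomp
    have hg'der : ∀ u ∈ Icc (0:ℝ) 1, HasDerivAt g' (g'' u) u := by
      intro u hu
      have hd : HasFDerivAt (gradient F) (fderiv ℝ (gradient F) (ℓ u)) (ℓ u) :=
        (diffAt_grad hF (hnz u hu)).hasFDerivAt
      have h1 : HasFDerivAt (fun y => ⟪v, gradient F y⟫)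
          ((innerSL ℝ v).comp (fderiv ℝ (gradient F) (ℓ u))) (ℓ u) :=
        ((innerSL ℝ v).hasFDerivAt).comp (ℓ u) hd
      have h2 := h1.comp_hasDerivAt u (hline u)
      rw [show g'' u = ((innerSL ℝ v).comp (fderiv ℝ (gradient F) (ℓ u))) v from by simp [hg'']]
      exact h2
    have hgc : ContinuousOn g (Icc 0 1) := fun u hu =>
      ((hgder u hu).continuousAt).continuousWithinAt
    have hg'c : ContinuousOn g' (Icc 0 1) := fun u hu =>
      ((hg'der u hu).continuousAt).continuousWithinAt
    have hℓ0 : ℓ 0 = x := by simp [hl]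
    have hvT : v - ⟪v, x⟫ • x ≠ 0 := by
      intro hw
      have hveq : v = ⟪v, x⟫ • x := by rwa [sub_eq_zero] at hw
      have hzeq : z = (1 + ⟪v, x⟫) • x := by
        rw [add_smul, one_smul, ← hveq, hv]; abel
      have habs : |1 + ⟪v, x⟫| = 1 := by
        rw [← Real.norm_eq_abs]
        have : ‖z‖ = ‖(1 + ⟪v, x⟫) • x‖ := by rw [← hzeq]
        rw [norm_smul, hx1, mul_one] at this
        rw [← this, hz1]
      rcases (abs_eq (by norm_num : (0:ℝ) ≤ 1)).1 habs with h1 | h1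
      · apply hne
        rw [hzeq, show (1 + ⟪v, x⟫ : ℝ) = 1 from h1, one_smul]
      · apply hzx
        rw [hzeq, show (1 + ⟪v, x⟫ : ℝ) = -1 from h1, neg_smul, one_smul]
    have h0pos : 0 < g'' 0 := by
      show (0:ℝ) < ⟪v, fderiv ℝ (gradient F) (ℓ 0) v⟫
      rw [hℓ0, real_inner_comm]
      exact tangential_nonzero_pos hF hx hvT
    have hg''nonneg : ∀ u ∈ Icc (0:ℝ) 1, 0 ≤ g'' u := by
      intro u hu
      show (0:ℝ) ≤ ⟪v, fderiv ℝ (gradient F) (ℓ u) v⟫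
      rw [real_inner_comm]
      exact hess_nonneg hF (hnz u hu) v
    have hg''cont : ContinuousAt g'' 0 := by
      have hA2 : ContDiffAt ℝ 1 (fderiv ℝ (gradient F)) x :=
        (contDiffAt_grad hF hx0).fderiv_right (by norm_num)
      have hA : ContinuousAt (fderiv ℝ (gradient F)) x := hA2.continuousAt
      have hℓcont : ContinuousAt ℓ 0 :=
        (continuous_const.add (continuous_id.smul continuous_const)).continuousAt
      have h1 : ContinuousAt (fun u => fderiv ℝ (gradient F) (ℓ u)) 0 := by
        apply ContinuousAt.comp ?_ hℓcont
        rw [hℓ0]; exact hA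
      have h2 : ContinuousAt (fun u => fderiv ℝ (gradient F) (ℓ u) v) 0 :=
        ((ContinuousLinearMap.apply ℝ (Euc n) v).continuous.continuousAt).comp h1
      exact continuousAt_const.inner h2
    have hev : ∀ᶠ u in nhds (0:ℝ), 0 < g'' u := hg''cont (isOpen_Ioi.mem_nhds h0pos)
    obtain ⟨ε, hε0, hεball⟩ := Metric.mem_nhds_iff.1 hev
    set δ : ℝ := min (ε/2) (1/2) with hδdef
    have hδ0 : 0 < δ := lt_min (by linarith) (by norm_num)
    have hδ1 : δ < 1 := lt_of_le_of_lt (min_le_right _ _) (by norm_num)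
    have hδε : δ < ε := lt_of_le_of_lt (min_le_left _ _) (by linarith)
    have hδsub : Icc (0:ℝ) δ ⊆ Icc 0 1 := Icc_subset_Icc le_rfl hδ1.le
    have hsm : StrictMonoOn g' (Icc 0 δ) := by
      apply strictMonoOn_of_deriv_pos (convex_Icc 0 δ) (hg'c.mono hδsub)
      intro u hu
      rw [interior_Icc] at hu
      have huI : u ∈ Icc (0:ℝ) 1 := ⟨hu.1.le, le_trans hu.2.le hδ1.le⟩
      rw [(hg'der u huI).deriv]
      apply hεball
      rw [Metric.mem_ball, Real.dist_eq, sub_zero, abs_of_pos hu.1]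
      exact lt_trans hu.2 hδε
    have hmono : MonotoneOn g' (Icc 0 1) := by
      apply monotoneOn_of_deriv_nonneg (convex_Icc 0 1) hg'c
      · intro u hu; rw [interior_Icc] at hu
        exact ((hg'der u (Ioo_subset_Icc_self hu)).differentiableAt).differentiableWithinAt
      · intro u hu; rw [interior_Icc] at hu
        rw [(hg'der u (Ioo_subset_Icc_self hu)).deriv]
        exact hg''nonneg u (Ioo_subset_Icc_self hu)
    obtain ⟨c₁, hc₁, hc₁eq⟩ := exists_hasDerivAt_eq_slope g g' hδ0 (hgc.mono hδsub)
      (fun u hu => hgder u (hδsub (Ioo_subset_Icc_self hu)))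
    obtain ⟨c₂, hc₂, hc₂eq⟩ := exists_hasDerivAt_eq_slope g g' hδ1
      (hgc.mono (Icc_subset_Icc hδ0.le le_rfl))
      (fun u hu => hgder u ⟨(hδ0.trans hu.1).le, hu.2.le⟩)
    have i1 : g' 0 ≤ g' c₁ := hmono ⟨le_rfl, zero_le_one⟩
      ⟨hc₁.1.le, le_trans hc₁.2.le hδ1.le⟩ hc₁.1.le
    have i2 : g' 0 < g' δ := hsm ⟨le_rfl, hδ0.le⟩ ⟨hδ0.le, le_rfl⟩ hδ0
    have i3 : g' δ ≤ g' c₂ := hmono ⟨hδ0.le, hδ1.le⟩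
      ⟨(hδ0.trans hc₂.1).le, hc₂.2.le⟩ hc₂.1.le
    have e1 : g δ - g 0 = g' c₁ * δ := by
      rw [hc₁eq, sub_zero, div_mul_cancel₀ _ hδ0.ne']
    have e2 : g 1 - g δ = g' c₂ * (1 - δ) := by
      rw [hc₂eq, div_mul_cancel₀ _ (by linarith : (1:ℝ) - δ ≠ 0)]
    have hfinal : g 0 + g' 0 < g 1 := by
      have m1 : g' 0 * (1 - δ) < g' c₂ * (1 - δ) :=
        mul_lt_mul_of_pos_right (lt_of_lt_of_le i2 i3) (by linarith)
      have m2 : g' 0 * δ ≤ g' c₁ * δ := mul_le_mul_of_nonneg_right i1 hδ0.le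
      nlinarith [e1, e2]
    have hg1 : g 1 = F z := by
      show F (ℓ 1) = F z
      have : ℓ 1 = z := by simp [hl, hv]
      rw [this]
    have hg0 : g 0 = F x := by show F (ℓ 0) = F x; rw [hℓ0]
    have hg'0 : g' 0 = ⟪gradient F x, z⟫ - F x := by
      show ⟪v, gradient F (ℓ 0)⟫ = ⟪gradient F x, z⟫ - F x
      rw [hℓ0, real_inner_comm, hv, inner_sub_right, euler_grad hF hx0]
    rw [hg1, hg0, hg'0] at hfinal
    linarith

lemma keyle (hF : IsAnisoNorm F) {x z : Euc n} (hx : x ∈ unitSphere n)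
    (hz : z ∈ unitSphere n) : ⟪gradient F x, z⟫ ≤ F z := by
  rcases eq_or_ne z x with rfl | hne
  · exact le_of_eq (euler_grad hF (sphere_ne_zero hx))
  · exact (keylt hF hx hz hne).le

lemma keyeq (hF : IsAnisoNorm F) {x z : Euc n} (hx : x ∈ unitSphere n)
    (hz : z ∈ unitSphere n) (h : ⟪gradient F x, z⟫ = F z) : z = x := by
  by_contra hne
  exact absurd h (ne_of_lt (keylt hF hx hz hne))

instance sphereNonempty (n : ℕ) : Nonempty (unitSphere n) := by
  have : (sphere (0 : Euc n) 1).Nonempty :=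
    NormedSpace.sphere_nonempty.2 (by norm_num)
  exact this.to_subtype

lemma exists_min (hF : IsAnisoNorm F) :
    ∃ m : ℝ, 0 < m ∧ ∀ z ∈ unitSphere n, m ≤ F z := by
  have hcomp : IsCompact (unitSphere n) := isCompact_sphere 0 1
  have hne : (unitSphere n).Nonempty := NormedSpace.sphere_nonempty.2 (by norm_num)
  have hcont : ContinuousOn F (unitSphere n) :=
    hF.smooth.continuousOn.mono (fun z hz => by simpa using sphere_ne_zero hz)
  obtain ⟨z₀, hz₀, hmin⟩ := hcomp.exists_isMinOn hne hcont
  exact ⟨F z₀, hF.pos z₀ hz₀, fun z hz => hmin hz⟩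

lemma ratio_bound {m : ℝ} (hm : 0 < m) (hmle : ∀ z ∈ unitSphere n, m ≤ F z)
    (x : Euc n) {z : Euc n} (hz : z ∈ unitSphere n) :
    ⟪x, z⟫ / F z ≤ ‖x‖ / m := by
  have hFz : 0 < F z := lt_of_lt_of_le hm (hmle z hz)
  rcases le_or_gt ⟪x, z⟫ 0 with h | h
  · exact le_trans (div_nonpos_of_nonpos_of_nonneg h hFz.le) (div_nonneg (norm_nonneg x) hm.le)
  · have hle : ⟪x, z⟫ ≤ ‖x‖ := by
      have := real_inner_le_norm x z
      rwa [mem_sphere_iff.1 hz, mul_one] at this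
    exact div_le_div₀ (norm_nonneg x) hle hm (hmle z hz)

lemma dual_bddAbove (hF : IsAnisoNorm F) (x : Euc n) :
    BddAbove (Set.range fun z : unitSphere n => ⟪x, (z : Euc n)⟫ / F (z : Euc n)) := by
  obtain ⟨m, hm, hmle⟩ := exists_min hF
  exact ⟨‖x‖ / m, by rintro r ⟨z, rfl⟩; exact ratio_bound hm hmle x z.2⟩

lemma dual_le (hF : IsAnisoNorm F) (x : Euc n) {z : Euc n} (hz : z ∈ unitSphere n) :
    ⟪x, z⟫ / F z ≤ dualF F x :=
  le_ciSup (dual_bddAbove hF x) ⟨z, hz⟩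

lemma dual_attain (hF : IsAnisoNorm F) (x : Euc n) :
    ∃ z ∈ unitSphere n, dualF F x = ⟪x, z⟫ / F z := by
  have hcomp : IsCompact (unitSphere n) := isCompact_sphere 0 1
  have hne : (unitSphere n).Nonempty := NormedSpace.sphere_nonempty.2 (by norm_num)
  have hcont : ContinuousOn (fun z : Euc n => ⟪x, z⟫ / F z) (unitSphere n) := by
    apply ContinuousOn.div
    · exact (continuous_const.inner continuous_id).continuousOn
    · exact hF.smooth.continuousOn.mono (fun z hz => by simpa using sphere_ne_zero hz)
    · exact fun z hz => (hF.pos z hz).ne'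
  obtain ⟨z₀, hz₀, hmax⟩ := hcomp.exists_isMaxOn hne hcont
  refine ⟨z₀, hz₀, le_antisymm (ciSup_le fun w => hmax w.2) (dual_le hF x hz₀)⟩

lemma dual_add (hF : IsAnisoNorm F) (x y : Euc n) :
    dualF F (x + y) ≤ dualF F x + dualF F y := by
  apply ciSup_le
  intro z
  rw [inner_add_left, add_div]
  exact add_le_add (dual_le hF x z.2) (dual_le hF y z.2)

lemma dual_smul (hF : IsAnisoNorm F) {c : ℝ} (hc : 0 ≤ c) (x : Euc n) :
    dualF F (c • x) = c * dualF F x := by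
  rw [dualF, dualF, Real.mul_iSup_of_nonneg hc]
  congr 1
  ext z
  rw [real_inner_smul_left, mul_div_assoc]

lemma dual_nonneg (hF : IsAnisoNorm F) (x : Euc n) : 0 ≤ dualF F x := by
  set e : Euc n := EuclideanSpace.single (0 : Fin (n+1)) (1:ℝ) with he
  have hee : e ∈ unitSphere n := by
    rw [mem_sphere_iff, he, EuclideanSpace.norm_single, norm_one]
  have hnee : -e ∈ unitSphere n := by
    rw [mem_sphere_iff, norm_neg, he, EuclideanSpace.norm_single, norm_one]
  rcases le_or_gt 0 ⟪x, e⟫ with h | h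
  · exact le_trans (div_nonneg h (hF.pos e hee).le) (dual_le hF x hee)
  · have h2 : (0:ℝ) ≤ ⟪x, -e⟫ / F (-e) := by
      rw [inner_neg_right]
      exact div_nonneg (by linarith) (hF.pos _ hnee).le
    exact le_trans h2 (dual_le hF x hnee)

lemma dual_grad (hF : IsAnisoNorm F) {x : Euc n} (hx : x ∈ unitSphere n) :
    dualF F (gradient F x) = 1 := by
  apply le_antisymm
  · apply ciSup_le
    intro z
    rw [div_le_one (hF.pos _ z.2)]
    exact keyle hF hx z.2
  · have h1 : ⟪gradient F x, x⟫ / F x = 1 := by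
      rw [euler_grad hF (sphere_ne_zero hx), div_self (hF.pos x hx).ne']
    rw [← h1]
    exact dual_le hF _ hx

end AnisoAux

open AnisoAux

/-- The rays `Γ_p = { p + t·φ(ν(p)) : 0 ≤ t < c(p) }` from distinct points of
`M = ∂D` are pairwise disjoint. -/
theorem stmt_11 {n : ℕ} (F : Euc n → ℝ) (hF : IsAnisoNorm F)
    (D : Set (Euc n)) (hD : IsCompact D) (hint : (interior D).Nonempty)
    (ν : Euc n → Euc n)
    (hν : ∀ p ∈ frontier D, IsInnerUnitNormalAt D (frontier D) p (ν p))
    (hsm : ContDiffOn ℝ (⊤ : ℕ∞) ν (frontier D)) :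
    ∀ p ∈ frontier D, ∀ q ∈ frontier D, p ≠ q →
      ∀ s t : ℝ, 0 ≤ s → s < cutValue F (frontier D) ν p →
        0 ≤ t → t < cutValue F (frontier D) ν q →
          p + s • wulffMap F (ν p) ≠ q + t • wulffMap F (ν q) := by
  intro p hp q hq hpq s t hs hsc ht htc heq
  have hνp : ν p ∈ unitSphere n := mem_sphere_iff.2 (hν p hp).1
  have hνq : ν q ∈ unitSphere n := mem_sphere_iff.2 (hν q hq).1
  set wp : Euc n := wulffMap F (ν p) with hwp
  set wq : Euc n := wulffMap F (ν q) with hwq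
  have hdwp : dualF F wp = 1 := dual_grad hF hνp
  have hdwq : dualF F wq = 1 := dual_grad hF hνq
  -- extract witnesses above s and t
  have hwitness : ∀ r : Euc n, ∀ u : ℝ, 0 ≤ u →
      u < cutValue F (frontier D) ν r →
      ∃ a, (0 < a ∧ anisoDistSet F (frontier D) (r + a • wulffMap F (ν r)) = a) ∧ u < a := by
    intro r u hu huc
    have huc' : u < sSup {c : ℝ | 0 < c ∧
        anisoDistSet F (frontier D) (r + c • wulffMap F (ν r)) = c} := huc
    set S := {c : ℝ | 0 < c ∧ anisoDistSet F (frontier D) (r + c • wulffMap F (ν r)) = c}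
      with hS
    by_cases hne : S.Nonempty
    · by_cases hbdd : BddAbove S
      · exact exists_lt_of_lt_csSup hne huc'
      · rw [Real.sSup_of_not_bddAbove hbdd] at huc'; linarith
    · rw [not_nonempty_iff_eq_empty.1 hne, Real.sSup_empty] at huc'; linarith
  obtain ⟨a, ⟨ha0, haeq⟩, hsa⟩ := hwitness p s hs hsc
  obtain ⟨b, ⟨hb0, hbeq⟩, htb⟩ := hwitness q t ht htc
  -- distance to set is at most distance to a point of the set
  have hlb : ∀ r ∈ frontier D, ∀ y : Euc n,
      anisoDistSet F (frontier D) y ≤ anisoDist F r y := by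
    intro r hr y
    apply csInf_le
    · exact ⟨0, by rintro c ⟨c', _, rfl⟩; exact dual_nonneg hF _⟩
    · exact ⟨r, hr, rfl⟩
  -- algebra
  have hqp : q = p + s • wp - t • wq := eq_sub_of_add_eq heq.symm
  have hpq' : p = q + t • wq - s • wp := eq_sub_of_add_eq heq
  have e1 : (q + b • wq) - p = s • wp + (b - t) • wq := by
    rw [hqp, sub_smul]; abel
  have e2 : (p + a • wp) - q = t • wq + (a - s) • wp := by
    rw [hpq', sub_smul]; abel
  -- step 1 : t ≤ s
  have hstep1 : b ≤ s + (b - t) := by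
    calc b = anisoDistSet F (frontier D) (q + b • wq) := hbeq.symm
      _ ≤ anisoDist F p (q + b • wq) := hlb p hp _
      _ = dualF F (s • wp + (b - t) • wq) := by rw [anisoDist, e1]
      _ ≤ dualF F (s • wp) + dualF F ((b - t) • wq) := dual_add hF _ _
      _ = s * 1 + (b - t) * 1 := by
          rw [dual_smul hF hs, dual_smul hF (by linarith : (0:ℝ) ≤ b - t), hdwp, hdwq]
      _ = s + (b - t) := by ring
  have hts : t ≤ s := by linarith
  -- step 2 : s ≤ t
  have hstep2 : a ≤ t + (a - s) := by
    calc a = anisoDistSet F (frontier D) (p + a • wp) := haeq.symm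
      _ ≤ anisoDist F q (p + a • wp) := hlb q hq _
      _ = dualF F (t • wq + (a - s) • wp) := by rw [anisoDist, e2]
      _ ≤ dualF F (t • wq) + dualF F ((a - s) • wp) := dual_add hF _ _
      _ = t * 1 + (a - s) * 1 := by
          rw [dual_smul hF ht, dual_smul hF (by linarith : (0:ℝ) ≤ a - s), hdwq, hdwp]
      _ = t + (a - s) := by ring
  have hst : s = t := le_antisymm (by linarith) hts
  -- s must be positive
  rcases eq_or_lt_of_le hs with hs0 | hspos
  · apply hpq
    have : p + s • wp = q + t • wq := heq
    rw [← hs0, ← hst, ← hs0] at this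
    simpa using this
  -- equality in the triangle inequality
  subst hst
  have hbs : 0 < b - s := by linarith
  have e3 : (q + b • wq) - p = s • wp + (b - s) • wq := e1
  have hsand : dualF F (s • wp + (b - s) • wq) = b := by
    apply le_antisymm
    · calc dualF F (s • wp + (b - s) • wq)
          ≤ dualF F (s • wp) + dualF F ((b - s) • wq) := dual_add hF _ _
        _ = s * 1 + (b - s) * 1 := by
            rw [dual_smul hF hs, dual_smul hF hbs.le, hdwp, hdwq]
        _ = b := by ring
    · calc b = anisoDistSet F (frontier D) (q + b • wq) := hbeq.symm
        _ ≤ anisoDist F p (q + b • wq) := hlb p hp _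
        _ = dualF F (s • wp + (b - s) • wq) := by rw [anisoDist, e3]
  obtain ⟨z, hzS, hzeq⟩ := dual_attain hF (s • wp + (b - s) • wq)
  have hFz : 0 < F z := hF.pos z hzS
  have hq1 : ⟪s • wp, z⟫ / F z ≤ s := by
    have := dual_le hF (s • wp) hzS
    rwa [dual_smul hF hs, hdwp, mul_one] at this
  have hq2 : ⟪(b - s) • wq, z⟫ / F z ≤ b - s := by
    have := dual_le hF ((b - s) • wq) hzS
    rwa [dual_smul hF hbs.le, hdwq, mul_one] at this
  have hsplit : ⟪s • wp, z⟫ / F z + ⟪(b - s) • wq, z⟫ / F z = b := by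
    rw [← add_div, ← inner_add_left, ← hzeq, hsand]
  have hA : ⟪s • wp, z⟫ / F z = s := by linarith
  have hB : ⟪(b - s) • wq, z⟫ / F z = b - s := by linarith
  have hwpz : ⟪wp, z⟫ = F z := by
    rw [real_inner_smul_left, mul_div_assoc] at hA
    have h5 : s * (⟪wp, z⟫ / F z) = s * 1 := by rw [mul_one]; exact hA
    have h6 := mul_left_cancel₀ hspos.ne' h5
    rwa [div_eq_one_iff_eq hFz.ne'] at h6
  have hwqz : ⟪wq, z⟫ = F z := by
    rw [real_inner_smul_left, mul_div_assoc] at hB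
    have h5 : (b - s) * (⟪wq, z⟫ / F z) = (b - s) * 1 := by rw [mul_one]; exact hB
    have h6 := mul_left_cancel₀ hbs.ne' h5
    rwa [div_eq_one_iff_eq hFz.ne'] at h6
  have hz1 : z = ν p := keyeq hF hνp hzS hwpz
  have hz2 : z = ν q := keyeq hF hνq hzS hwqz
  have hννν : ν p = ν q := hz1 ▸ hz2
  apply hpq
  have hww : wp = wq := by rw [hwp, hwq, hννν]
  have : p + s • wp = q + s • wp := by rw [heq, hww]
  exact add_right_cancel this
end
end
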